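/- arXiv:2206.13026 — 8 statements merged into one kernel-verified Lean document; each statement's English description precedes it below -/
import Mathlib

section
/- Let D be a countably infinite discrete space. Then the hyperspace F_2(D) of nonempty subsets of D with at most two points, equipped with the Fell topology, is not a D_1-space. -/
open Set TopologicalSpace

universe u v

/-- The Fell topology on the collection of all subsets of `X`, generated by the subbase
consisting of the sets `U⁻ = {H | H ∩ U ≠ ∅}` for `U` open and
`(Kᶜ)⁺ = {H | H ⊆ Kᶜ}` for `K` compact. -/
def fellTopology (X : Type u) [TopologicalSpace X] : TopologicalSpace (Set X) :=
  TopologicalSpace.generateFrom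
    ({S | ∃ U : Set X, IsOpen U ∧ S = {H : Set X | (H ∩ U).Nonempty}} ∪
     {S | ∃ K : Set X, IsCompact K ∧ S = {H : Set X | H ⊆ Kᶜ}})

/-- The Vietoris topology on the collection of all subsets of `X`, generated by the subbase
consisting of the sets `U⁺ = {H | H ⊆ U}` and `U⁻ = {H | H ∩ U ≠ ∅}` for `U` open. -/
def vietorisTopology (X : Type u) [TopologicalSpace X] : TopologicalSpace (Set X) :=
  TopologicalSpace.generateFrom
    ({S | ∃ U : Set X, IsOpen U ∧ S = {H : Set X | H ⊆ U}} ∪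
     {S | ∃ U : Set X, IsOpen U ∧ S = {H : Set X | (H ∩ U).Nonempty}})

/-- A collection `S` of subsets of `X`, viewed as a hyperspace with the Fell topology. -/
def FellHyper (X : Type u) [TopologicalSpace X] (S : Set (Set X)) : Type u :=
  {A : Set X // A ∈ S}

/-- A collection `S` of subsets of `X`, viewed as a hyperspace with the Vietoris topology. -/
def VietorisHyper (X : Type u) [TopologicalSpace X] (S : Set (Set X)) : Type u :=
  {A : Set X // A ∈ S}

instance FellHyper.instTopologicalSpace (X : Type u) [TopologicalSpace X] (S : Set (Set X)) :
    TopologicalSpace (FellHyper X S) :=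
  TopologicalSpace.induced (Subtype.val : {A : Set X // A ∈ S} → Set X) (fellTopology X)

instance VietorisHyper.instTopologicalSpace (X : Type u) [TopologicalSpace X] (S : Set (Set X)) :
    TopologicalSpace (VietorisHyper X S) :=
  TopologicalSpace.induced (Subtype.val : {A : Set X // A ∈ S} → Set X) (vietorisTopology X)

/-- The underlying subset of `X` of a point of a Fell hyperspace. -/
def FellHyper.carrier {X : Type u} [TopologicalSpace X] {S : Set (Set X)}
    (A : FellHyper X S) : Set X :=
  Subtype.val A

/-- The underlying subset of `X` of a point of a Vietoris hyperspace. -/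
def VietorisHyper.carrier {X : Type u} [TopologicalSpace X] {S : Set (Set X)}
    (A : VietorisHyper X S) : Set X :=
  Subtype.val A

/-- `CL(X)`: the nonempty closed subsets of `X`. -/
def CL (X : Type u) [TopologicalSpace X] : Set (Set X) := {A | A.Nonempty ∧ IsClosed A}

/-- `𝒦(X)`: the nonempty compact subsets of `X`. -/
def Kcal (X : Type u) [TopologicalSpace X] : Set (Set X) := {A | A.Nonempty ∧ IsCompact A}

/-- `ℱ(X)`: the nonempty finite subsets of `X`. -/
def Fcal (X : Type u) : Set (Set X) := {A | A.Nonempty ∧ A.Finite}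

/-- `ℱₙ(X)`: the nonempty subsets of `X` with at most `n` points. -/
def Fn (X : Type u) (n : ℕ) : Set (Set X) := {A | A.Nonempty ∧ A.encard ≤ n}

/-- A space is a `D₁`-space if every nonempty closed subset has a countable
neighborhood base. -/
def IsD1Space (Y : Type v) [TopologicalSpace Y] : Prop :=
  ∀ F : Set Y, F.Nonempty → IsClosed F →
    ∃ B : ℕ → Set Y, (∀ n, IsOpen (B n) ∧ F ⊆ B n) ∧
      ∀ V : Set Y, IsOpen V → F ⊆ V → ∃ n, B n ⊆ V

/-- A space is a `D₀`-space if every nonempty compact subset has a countable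
neighborhood base. -/
def IsD0Space (Y : Type v) [TopologicalSpace Y] : Prop :=
  ∀ F : Set Y, F.Nonempty → IsCompact F →
    ∃ B : ℕ → Set Y, (∀ n, IsOpen (B n) ∧ F ⊆ B n) ∧
      ∀ V : Set Y, IsOpen V → F ⊆ V → ∃ n, B n ⊆ V

/-- A space has a `G_δ`-diagonal if the diagonal is a `G_δ`-set in `X × X`. -/
def HasGdeltaDiagonal (X : Type u) [TopologicalSpace X] : Prop :=
  ∃ U : ℕ → Set (X × X), (∀ n, IsOpen (U n)) ∧ (⋂ n, U n) = {p : X × X | p.1 = p.2}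

/-- A space is perfect if every closed subset is a `G_δ`-set. -/
def IsPerfectSpace (Y : Type v) [TopologicalSpace Y] : Prop :=
  ∀ F : Set Y, IsClosed F → ∃ U : ℕ → Set Y, (∀ n, IsOpen (U n)) ∧ F = ⋂ n, U n

/-- A space has the compact-`G_δ` property if every compact subset is a `G_δ`-set. -/
def CompactGDeltaProperty (Y : Type v) [TopologicalSpace Y] : Prop :=
  ∀ K : Set Y, IsCompact K → ∃ U : ℕ → Set Y, (∀ n, IsOpen (U n)) ∧ K = ⋂ n, U n

/-- `γ`-space. -/
def IsGammaSpace (Y : Type v) [TopologicalSpace Y] : Prop :=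
  ∃ g : ℕ → Y → Set Y,
    (∀ n y, IsOpen (g n y) ∧ y ∈ g n y) ∧
    (∀ y, ∀ V : Set Y, IsOpen V → y ∈ V → ∃ n, g n y ⊆ V) ∧
    (∀ n y, ∃ m, ∀ z ∈ g m y, g m z ⊆ g n y)

/-- A space has a `G_δ*`-diagonal if there is a sequence `𝒰 n` of open covers such that
`{x} = ⋂ n, closure (st(x, 𝒰 n))` for every `x`. -/
def HasGdeltaStarDiagonal (X : Type u) [TopologicalSpace X] : Prop :=
  ∃ 𝒰 : ℕ → Set (Set X),
    (∀ n, ∀ U ∈ 𝒰 n, IsOpen U) ∧ (∀ n, ⋃₀ 𝒰 n = univ) ∧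
    ∀ x : X, (⋂ n, closure (⋃₀ {U ∈ 𝒰 n | x ∈ U})) = {x}

/-! Each basic neighbourhood of a singleton `{a}` in the Fell topology of a discrete space contains
`{a, b}` for all but finitely many `b`, so a countable family of neighbourhoods of the closed set
of singletons of `ℱ₂(D)` yields countably many cofinite conditions. Enumerating `D` as `ℕ`, a
diagonal argument picks, for each `n`, a pair `{aₙ, bₙ}` in the `n`-th neighbourhood together
with finite sets `L d` such that `bₙ ∈ L aₙ` and `aₙ ∈ L bₙ`. The Fell-open set of those `H`
having a point `d` with `H ∩ L d ⊆ {d}` contains every singleton but none of these pairs. -/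

open Filter Topology

theorem exists_finite_sets_mutual_of_eventually_cofinite {D : Type u} [Countable D]
    [Infinite D] (P : ℕ → D → D → Prop) (hP : ∀ n a, ∀ᶠ b in cofinite, P n a b) :
    ∃ L : D → Set D, (∀ a, (L a).Finite) ∧
      ∀ n, ∃ a b, a ≠ b ∧ P n a b ∧ b ∈ L a ∧ a ∈ L b := by
  obtain ⟨e⟩ : Nonempty (D ≃ ℕ) := nonempty_equiv_of_countable
  have hlarge : ∀ n, ∃ k, n < k ∧ P n (e.symm n) (e.symm k) := fun n =>
    ((eventually_gt_atTop n).and <| Nat.cofinite_eq_atTop ▸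
      e.symm.injective.tendsto_cofinite.eventually (hP n (e.symm n))).exists
  choose m hm_gt hm_P using hlarge
  refine ⟨fun d => e ⁻¹' Iic (m (e d)), fun d => (finite_Iic _).preimage e.injective.injOn,
    fun n => ⟨e.symm n, e.symm (m n), ?_, hm_P n, ?_, ?_⟩⟩
  · exact e.symm.injective.ne (hm_gt n).ne
  · simp
  · simpa using ((hm_gt n).trans (hm_gt (m n))).le

theorem pair_mem_Fn_two {X : Type u} (a b : X) : ({a, b} : Set X) ∈ Fn X 2 :=
  ⟨insert_nonempty a {b}, (encard_insert_le _ _).trans (by norm_num)⟩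

section Fell

attribute [local instance] fellTopology

variable {X : Type u} [TopologicalSpace X]

theorem isOpen_fell_inter_nonempty {U : Set X} (hU : IsOpen U) :
    IsOpen {H : Set X | (H ∩ U).Nonempty} :=
  isOpen_generateFrom_of_mem (Or.inl ⟨U, hU, rfl⟩)

theorem isOpen_fell_subset_compl {K : Set X} (hK : IsCompact K) :
    IsOpen {H : Set X | H ⊆ Kᶜ} :=
  isOpen_generateFrom_of_mem (Or.inr ⟨K, hK, rfl⟩)

theorem isOpen_fell_nontrivial [T2Space X] : IsOpen {H : Set X | H.Nontrivial} := by
  refine isOpen_iff_forall_mem_open.mpr ?_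
  rintro H ⟨a, ha, b, hb, hab⟩
  obtain ⟨U, V, hU, hV, haU, hbV, hUV⟩ := t2_separation hab
  refine ⟨{H | (H ∩ U).Nonempty} ∩ {H | (H ∩ V).Nonempty}, ?_,
    (isOpen_fell_inter_nonempty hU).inter (isOpen_fell_inter_nonempty hV),
    ⟨a, ha, haU⟩, ⟨b, hb, hbV⟩⟩
  rintro H' ⟨⟨x, hx, hxU⟩, ⟨y, hy, hyV⟩⟩
  exact ⟨x, hx, y, hy, hUV.ne_of_mem hxU hyV⟩

theorem isInducing_fellHyper_val (S : Set (Set X)) :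
    IsInducing (Subtype.val : FellHyper X S → Set X) :=
  ⟨rfl⟩

theorem isClosed_fellHyper_subsingleton [T2Space X] (S : Set (Set X)) :
    IsClosed {A : FellHyper X S | A.1.Subsingleton} := by
  have hcompl : {A : FellHyper X S | A.1.Subsingleton}ᶜ = Subtype.val ⁻¹' {H | H.Nontrivial} :=
    ext fun _ => not_subsingleton_iff
  exact isOpen_compl_iff.mp
    (hcompl ▸ isOpen_fell_nontrivial.preimage (isInducing_fellHyper_val S).continuous)

variable {D : Type u} [TopologicalSpace D] [DiscreteTopology D]

theorem tendsto_fell_insert_cofinite (a : D) :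
    Tendsto (fun b => ({a, b} : Set D)) cofinite (𝓝 {a}) := by
  rw [show 𝓝 ({a} : Set D) = _ from nhds_generateFrom]
  simp only [tendsto_iInf, tendsto_principal]
  rintro s ⟨has, ⟨U, -, rfl⟩ | ⟨K, hK, rfl⟩⟩
  · obtain ⟨x, rfl, hxU⟩ := has
    exact Eventually.of_forall fun b => ⟨x, mem_insert x {b}, hxU⟩
  · filter_upwards [hK.finite_of_discrete.eventually_cofinite_notMem] with b hb
    exact insert_subset (has rfl) (singleton_subset_iff.2 hb)

theorem isOpen_fell_exists_inter_subset_singleton {L : D → Set D} (hL : ∀ d, (L d).Finite) :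
    IsOpen {H : Set D | ∃ d ∈ H, H ∩ L d ⊆ {d}} := by
  have hunion : {H : Set D | ∃ d ∈ H, H ∩ L d ⊆ {d}} =
      ⋃ d, {H | (H ∩ {d}).Nonempty} ∩ {H | H ⊆ (L d \ {d})ᶜ} := by
    ext H
    simp only [mem_ofPred, mem_iUnion, mem_inter_iff, inter_singleton_nonempty]
    refine exists_congr fun d => and_congr_right fun _ => ⟨?_, ?_⟩
    · exact fun h x hxH hxL => hxL.2 (h ⟨hxH, hxL.1⟩)
    · exact fun h x hx => by_contra fun hxd => h hx.1 ⟨hx.2, hxd⟩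
  rw [hunion]
  exact isOpen_iUnion fun d => (isOpen_fell_inter_nonempty (isOpen_discrete _)).inter
    (isOpen_fell_subset_compl (hL d).sdiff.isCompact)

def FellHyper.pair (a b : D) : FellHyper D (Fn D 2) :=
  ⟨{a, b}, pair_mem_Fn_two a b⟩

theorem FellHyper.tendsto_pair_cofinite (a : D) :
    Tendsto (FellHyper.pair a) cofinite (𝓝 (FellHyper.pair a a)) := by
  refine (isInducing_fellHyper_val (Fn D 2)).tendsto_nhds_iff.mpr ?_
  change Tendsto (fun b => ({a, b} : Set D)) cofinite (𝓝 {a, a})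
  rw [pair_eq_singleton]
  exact tendsto_fell_insert_cofinite a

theorem isOpen_fellHyper_exists_inter_subset_singleton {L : D → Set D}
    (hL : ∀ d, (L d).Finite) (S : Set (Set D)) :
    IsOpen {A : FellHyper D S | ∃ d ∈ A.1, A.1 ∩ L d ⊆ {d}} :=
  (isOpen_fell_exists_inter_subset_singleton hL).preimage
    (isInducing_fellHyper_val S).continuous

end Fell

/-- For a countably infinite discrete space `D`, the hyperspace
`ℱ₂(D)` with the Fell topology is not a `D₁`-space. -/
theorem statement1 (D : Type u) [TopologicalSpace D] [DiscreteTopology D]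
    [Countable D] [Infinite D] :
    ¬ IsD1Space (FellHyper D (Fn D 2)) := by
  intro hD1
  have hpair_self (a : D) : (FellHyper.pair a a).1.Subsingleton := by
    simp [FellHyper.pair]
  obtain ⟨d⟩ := (inferInstance : Nonempty D)
  obtain ⟨B, hB, hB_base⟩ := hD1 _ ⟨_, hpair_self d⟩ (isClosed_fellHyper_subsingleton _)
  obtain ⟨L, hL, hmutual⟩ := exists_finite_sets_mutual_of_eventually_cofinite
    (fun n a b => FellHyper.pair a b ∈ B n) fun n a =>
      FellHyper.tendsto_pair_cofinite a ((hB n).1.mem_nhds ((hB n).2 (hpair_self a)))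
  obtain ⟨n, hn⟩ := hB_base _ (isOpen_fellHyper_exists_inter_subset_singleton hL _)
    fun A hA => ⟨A.2.1.some, A.2.1.some_mem,
      fun x hx => hA.eq_singleton_of_mem A.2.1.some_mem ▸ hx.1⟩
  obtain ⟨a, b, hab, hmem, hbL, haL⟩ := hmutual n
  obtain ⟨c, hc, hcL⟩ := hn hmem
  rcases hc with rfl | rfl
  · exact hab.symm (hcL ⟨mem_insert_of_mem _ rfl, hbL⟩)
  · exact hab (hcL ⟨mem_insert _ _, haL⟩)
end

section
/- Let X be a T1 regular space. If the hyperspace F_2(X) of nonempty subsets of X with at most two points, equipped with the Fell topology, is perfect (every closed subset is a G_δ-set), then X has a G_δ-diagonal. -/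
open Set TopologicalSpace

universe u v

open Topology

lemma pair_mem_Fn2 {X : Type u} (x y : X) : ({x, y} : Set X) ∈ Fn X 2 := by
  refine ⟨⟨x, by simp⟩, ?_⟩
  calc ({x, y} : Set X).encard ≤ ({y} : Set X).encard + 1 := Set.encard_insert_le _ _
    _ ≤ 2 := by rw [Set.encard_singleton]; rfl

lemma fell_phi_continuous (X : Type u) [TopologicalSpace X] [T2Space X] :
    Continuous[_, fellTopology X] (fun p : X × X => ({p.1, p.2} : Set X)) := by
  rw [fellTopology, continuous_generateFrom_iff]
  rintro s (⟨U, hU, rfl⟩ | ⟨K, hK, rfl⟩)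
  · have : (fun p : X × X => ({p.1, p.2} : Set X)) ⁻¹' {H | (H ∩ U).Nonempty}
        = (Prod.fst ⁻¹' U) ∪ (Prod.snd ⁻¹' U) := by
      ext p
      constructor
      · rintro ⟨z, hz1, hz2⟩
        rcases hz1 with rfl | rfl
        · exact Or.inl hz2
        · exact Or.inr hz2
      · rintro (hp | hp)
        · exact ⟨p.1, by simp, hp⟩
        · exact ⟨p.2, by simp, hp⟩
    rw [this]
    exact (hU.preimage continuous_fst).union (hU.preimage continuous_snd)
  · have : (fun p : X × X => ({p.1, p.2} : Set X)) ⁻¹' {H | H ⊆ Kᶜ}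
        = (Prod.fst ⁻¹' Kᶜ) ∩ (Prod.snd ⁻¹' Kᶜ) := by
      ext p
      simp [Set.insert_subset_iff]
    rw [this]
    have hKc : IsOpen Kᶜ := hK.isClosed.isOpen_compl
    exact (hKc.preimage continuous_fst).inter (hKc.preimage continuous_snd)

/-- If `ℱ₂(X)` with the Fell topology is perfect, then `X` has a
`G_δ`-diagonal. -/
theorem statement2 (X : Type u) [TopologicalSpace X] [T1Space X] [RegularSpace X]
    (h : IsPerfectSpace (FellHyper X (Fn X 2))) :
    HasGdeltaDiagonal X := by
  haveI : T2Space X := inferInstance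
  have hval : Continuous[FellHyper.instTopologicalSpace X (Fn X 2), fellTopology X]
      (Subtype.val : FellHyper X (Fn X 2) → Set X) := continuous_induced_dom
  -- the set of singletons in the hyperspace
  set C : Set (FellHyper X (Fn X 2)) := {A | ∃ x : X, A.1 = {x}} with hC
  -- C is closed
  have hCclosed : IsClosed C := by
    rw [← isOpen_compl_iff]
    set S : Set (Set X) := ⋃₀ {s | ∃ U V : Set X, IsOpen U ∧ IsOpen V ∧ Disjoint U V ∧
        s = {H : Set X | (H ∩ U).Nonempty} ∩ {H : Set X | (H ∩ V).Nonempty}} with hS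
    have hSopen : IsOpen[fellTopology X] S := by
      refine TopologicalSpace.GenerateOpen.sUnion _ ?_
      rintro s ⟨U, V, hU, hV, hUV, rfl⟩
      exact TopologicalSpace.GenerateOpen.inter _ _
        (TopologicalSpace.GenerateOpen.basic _ (Or.inl ⟨U, hU, rfl⟩))
        (TopologicalSpace.GenerateOpen.basic _ (Or.inl ⟨V, hV, rfl⟩))
    have heq : Cᶜ = (Subtype.val : FellHyper X (Fn X 2) → Set X) ⁻¹' S := by
      ext A
      simp only [Set.mem_preimage, Set.mem_compl_iff, hC, hS, Set.mem_setOf_eq,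
        Set.mem_sUnion]
      constructor
      · intro hA
        obtain ⟨x, hx⟩ := A.2.1
        have hy : ∃ y ∈ A.1, y ≠ x := by
          by_contra hcon
          push_neg at hcon
          exact hA ⟨x, Set.eq_singleton_iff_unique_mem.2 ⟨hx, hcon⟩⟩
        obtain ⟨y, hy, hyx⟩ := hy
        obtain ⟨U, V, hU, hV, hxU, hyV, hUV⟩ := t2_separation hyx.symm
        exact ⟨_, ⟨U, V, hU, hV, hUV, rfl⟩, ⟨x, hx, hxU⟩, ⟨y, hy, hyV⟩⟩
      · rintro ⟨s, ⟨U, V, hU, hV, hUV, rfl⟩, ⟨a, haA, haU⟩, ⟨b, hbA, hbV⟩⟩ ⟨x, hx⟩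
        rw [hx] at haA hbA
        have hxa : a = x := haA
        have hxb : b = x := hbA
        exact hUV.ne_of_mem (hxa ▸ haU) (hxb ▸ hbV) rfl
    rw [heq]
    exact @Continuous.isOpen_preimage _ _ _ (fellTopology X) _ hval S hSopen
  obtain ⟨G, hGopen, hGeq⟩ := h C hCclosed
  -- extract open sets in the Fell topology
  have hT : ∀ n, ∃ T : Set (Set X), IsOpen[fellTopology X] T ∧
      (Subtype.val : FellHyper X (Fn X 2) → Set X) ⁻¹' T = G n := fun n =>
    (@isOpen_induced_iff (FellHyper X (Fn X 2)) (Set X) (fellTopology X) (G n)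
      Subtype.val).1 (hGopen n)
  choose T hTopen hTpre using hT
  -- the map (x, y) ↦ {x, y}
  set φ : X × X → Set X := fun p => ({p.1, p.2} : Set X) with hφ
  refine ⟨fun n => φ ⁻¹' T n,
    fun n => @Continuous.isOpen_preimage _ _ _ (fellTopology X) _ (fell_phi_continuous X) (T n) (hTopen n), ?_⟩
  ext p
  simp only [Set.mem_iInter, Set.mem_preimage, Set.mem_setOf_eq]
  set ψ : X × X → FellHyper X (Fn X 2) := fun p => ⟨φ p, pair_mem_Fn2 p.1 p.2⟩ with hψ
  have key : (∀ n, φ p ∈ T n) ↔ ψ p ∈ C := by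
    rw [hGeq]
    simp only [Set.mem_iInter]
    constructor
    · intro hp n
      rw [← hTpre n]
      exact hp n
    · intro hp n
      have := hp n
      rw [← hTpre n] at this
      exact this
  rw [key]
  constructor
  · rintro ⟨x, hx⟩
    have hx' : ({p.1, p.2} : Set X) = {x} := hx
    have h1 : p.1 ∈ ({x} : Set X) := hx' ▸ (by simp : p.1 ∈ ({p.1, p.2} : Set X))
    have h2 : p.2 ∈ ({x} : Set X) := hx' ▸ (by simp : p.2 ∈ ({p.1, p.2} : Set X))
    simp only [Set.mem_singleton_iff] at h1 h2
    rw [h1, h2]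
  · intro hp
    refine ⟨p.1, ?_⟩
    show ({p.1, p.2} : Set X) = {p.1}
    rw [← hp]
    simp
end

section
/- Let X be a T1 regular space. The following are equivalent: (1) the hyperspace CL(X) with the Fell topology is a D_1-space; (2) the hyperspace K(X) of nonempty compact subsets with the Fell topology is a D_1-space; (3) F_n(X) with the Fell topology is a D_1-space for some n ≥ 2; (4) X is compact and metrizable. -/
open Set TopologicalSpace

universe u v

/-!
Applied to the closed point `{x}` of the hyperspace, the `D₁` property gives a countable base of
Fell-open neighbourhoods of `{x}`. A basic neighbourhood of `{x}` excludes only the sets meeting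
one compact set `K`, so it contains every doubleton `{x, z}` with `z ∉ K`; hence the compact sets
missing `x` have a countable cofinal subfamily, and `X` is first countable and hemicompact, so
locally compact and σ-compact. Applied to the closed set of singletons, `D₁` gives a countable base
`O k`. If `X` were not compact, each `O k` would contain a doubleton outside the `k`-th set of a
compact exhaustion; these doubletons form a locally finite family, which a Fell-open set containing
all singletons can avoid. Pulled back along `(a, b) ↦ {a, b}`, the `O k` also make the diagonal a
`G_δ`, and a compact Hausdorff space with a `G_δ` diagonal is second countable, hence metrizable.

Conversely, for a compact metric space `X`, an ultrafilter of closed sets converges in the Fell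
topology to its Kuratowski lower limit, so `CL(X)` and `ℱ₂(X)` are compact, and the distances to a
countable dense set embed them into a metrizable space; compact metrizable spaces are `D₁`.
-/

open Filter Topology

theorem IsD1Space.firstCountableTopology {Y : Type v} [TopologicalSpace Y] [T1Space Y]
    (h : IsD1Space Y) : FirstCountableTopology Y := by
  refine ⟨fun y => ?_⟩
  obtain ⟨B, hB, hbase⟩ := h {y} (singleton_nonempty y) isClosed_singleton
  refine HasBasis.isCountablyGenerated (p := fun _ : ℕ => True) (s := B) ⟨fun t => ⟨?_, ?_⟩⟩
  · intro ht
    obtain ⟨V, hVt, hV, hyV⟩ := mem_nhds_iff.1 ht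
    obtain ⟨n, hn⟩ := hbase V hV (singleton_subset_iff.2 hyV)
    exact ⟨n, trivial, hn.trans hVt⟩
  · rintro ⟨n, -, hn⟩
    exact mem_of_superset ((hB n).1.mem_nhds ((hB n).2 rfl)) hn

theorem IsD1Space.exists_seq_of_isInducing {Y : Type v} {Z : Type*} [TopologicalSpace Y]
    [TopologicalSpace Z] {f : Y → Z} (hf : IsInducing f) (hD : IsD1Space Y) {F : Set Y}
    (hne : F.Nonempty) (hF : IsClosed F) :
    ∃ O : ℕ → Set Z, (∀ k, IsOpen (O k)) ∧ (∀ k, F ⊆ f ⁻¹' O k) ∧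
      ∀ V : Set Z, IsOpen V → F ⊆ f ⁻¹' V → ∃ k, f ⁻¹' O k ⊆ f ⁻¹' V := by
  obtain ⟨B, hB, hbase⟩ := hD F hne hF
  choose O hO hOB using fun k => hf.isOpen_iff.1 (hB k).1
  refine ⟨O, hO, fun k => (hOB k).symm ▸ (hB k).2, fun V hV hFV => ?_⟩
  simp only [hOB]
  exact hbase _ (hV.preimage hf.continuous) hFV

theorem IsD1Space.of_compactSpace_of_metrizableSpace (Y : Type v) [TopologicalSpace Y]
    [CompactSpace Y] [MetrizableSpace Y] : IsD1Space Y := by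
  let := metrizableSpaceMetric Y
  intro F _ hF
  refine ⟨fun n => Metric.thickening (1 / (n + 1)) F, fun n =>
    ⟨Metric.isOpen_thickening, Metric.self_subset_thickening (by positivity) F⟩, ?_⟩
  intro V hV hFV
  obtain ⟨δ, hδ, hδV⟩ := hF.isCompact.exists_thickening_subset_open hV hFV
  obtain ⟨n, hn⟩ := exists_nat_one_div_lt hδ
  exact ⟨n, (Metric.thickening_mono hn.le F).trans hδV⟩

def IsHemicompact (X : Type u) [TopologicalSpace X] : Prop :=
  ∃ C : ℕ → Set X, (∀ n, IsCompact (C n)) ∧ ∀ K : Set X, IsCompact K → ∃ n, K ⊆ C n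

namespace IsHemicompact

variable {X : Type u} [TopologicalSpace X]

theorem sigmaCompactSpace (h : IsHemicompact X) : SigmaCompactSpace X := by
  obtain ⟨C, hC, hcof⟩ := h
  refine ⟨⟨C, hC, iUnion_eq_univ_iff.2 fun x => ?_⟩⟩
  obtain ⟨n, hn⟩ := hcof {x} isCompact_singleton
  exact ⟨n, hn rfl⟩

theorem weaklyLocallyCompactSpace [FirstCountableTopology X] (h : IsHemicompact X) :
    WeaklyLocallyCompactSpace X := by
  obtain ⟨C, hC, hcof⟩ := h
  refine ⟨fun x => ?_⟩
  by_contra! hx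
  obtain ⟨T, hT⟩ := (𝓝 x).exists_antitone_basis
  have hescape : ∀ n, ∃ w ∈ T n, w ∉ C n := fun n =>
    not_subset.1 fun hTC => hx _ (hC n) (mem_of_superset (hT.mem n) hTC)
  choose w hwT hwC using hescape
  obtain ⟨n, hn⟩ := hcof _ (hT.tendsto hwT).isCompact_insert_range
  exact hwC n (hn (mem_insert_of_mem _ (mem_range_self n)))

end IsHemicompact

theorem CompactExhaustion.locallyFinite_of_disjoint {X : Type u} [TopologicalSpace X]
    (K : CompactExhaustion X) {A : ℕ → Set X} (hA : ∀ n, Disjoint (A n) (K n)) :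
    LocallyFinite A := by
  intro x
  obtain ⟨n, hn⟩ := K.exists_mem x
  refine ⟨K (n + 1), mem_interior_iff_mem_nhds.1 (K.subset_interior_succ n hn),
    (finite_lt_nat (n + 1)).subset fun k ⟨w, hwA, hwK⟩ => ?_⟩
  by_contra hk
  exact (hA k).notMem_of_mem_left hwA (K.subset (not_lt.1 hk) hwK)
theorem secondCountableTopology_of_finite_covers {X : Type u} [TopologicalSpace X]
    [CompactSpace X] (𝒱 : ℕ → Set (Set X)) (hfin : ∀ n, (𝒱 n).Finite)
    (hopen : ∀ n, ∀ s ∈ 𝒱 n, IsOpen s) (hcover : ∀ n, ⋃₀ 𝒱 n = univ)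
    (hsep : ∀ (a : X) (s : ℕ → Set X), (∀ n, s n ∈ 𝒱 n ∧ a ∈ s n) →
      ∀ y, (∀ n, y ∈ closure (s n)) → y = a) :
    SecondCountableTopology X := by
  have h𝒱 : (⋃ n, 𝒱 n).Countable := countable_iUnion fun n => (hfin n).countable
  refine (isTopologicalBasis_of_isOpen_of_nhds
    (s := (fun g => ⋂₀ g) '' {g | g.Finite ∧ g ⊆ ⋃ n, 𝒱 n}) ?_ fun a u hau hu => ?_)
    |>.secondCountableTopology ((countable_ofPred_finite_subset h𝒱).image _)
  · rintro _ ⟨g, ⟨hg, hg𝒱⟩, rfl⟩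
    refine hg.isOpen_sInter fun s hs => ?_
    obtain ⟨n, hn⟩ := mem_iUnion.1 (hg𝒱 hs)
    exact hopen n s hn
  choose s hs using fun n => mem_sUnion.1 ((hcover n).symm ▸ mem_univ a)
  obtain ⟨I, hI⟩ := hu.isClosed_compl.isCompact.elim_finite_subfamily_closed
    (fun n => closure (s n)) (fun _ => isClosed_closure) <| by
      refine eq_empty_of_forall_notMem fun y ⟨hyu, hy⟩ => hyu ?_
      rw [hsep a s hs y (mem_iInter.1 hy)]
      exact hau
  refine ⟨⋂₀ (s '' I), ⟨_, ⟨I.finite_toSet.image _, ?_⟩, rfl⟩, ?_, fun y hy => ?_⟩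
  · rintro _ ⟨n, -, rfl⟩
    exact mem_iUnion.2 ⟨n, (hs n).1⟩
  · rintro _ ⟨n, -, rfl⟩
    exact (hs n).2
  · by_contra hyu
    refine (eq_empty_iff_forall_notMem.1 hI) y ⟨hyu, mem_iInter₂.2 fun n hn => ?_⟩
    exact subset_closure (hy _ ⟨n, hn, rfl⟩)

theorem HasGdeltaDiagonal.secondCountableTopology {X : Type u} [TopologicalSpace X]
    [CompactSpace X] [T2Space X] (h : HasGdeltaDiagonal X) : SecondCountableTopology X := by
  obtain ⟨U, hUo, hUd⟩ := h
  have hdiag (n : ℕ) : diagonal X ⊆ U n := hUd.symm.subset.trans (iInter_subset U n)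
  choose W hWo hdW hWU using fun n =>
    normal_exists_closure_subset isClosed_diagonal (hUo n) (hdiag n)
  have hsquare (n : ℕ) (x : X) : ∃ V : Set X, IsOpen V ∧ x ∈ V ∧ V ×ˢ V ⊆ W n := by
    obtain ⟨V₁, V₂, hV₁, hV₂, hx₁, hx₂, hV⟩ := isOpen_prod_iff.1 (hWo n) x x (hdW n rfl)
    exact ⟨V₁ ∩ V₂, hV₁.inter hV₂, ⟨hx₁, hx₂⟩, fun p hp => hV ⟨hp.1.1, hp.2.2⟩⟩
  choose V hVo hxV hVW using hsquare
  choose t ht using fun n =>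
    isCompact_univ.elim_nhds_subcover (V n) fun x _ => (hVo n x).mem_nhds (hxV n x)
  refine secondCountableTopology_of_finite_covers (fun n => V n '' t n)
    (fun n => (t n).finite_toSet.image _) (fun n => forall_mem_image.2 fun x _ => hVo n x)
    (fun n => sUnion_image _ _ ▸ univ_subset_iff.1 (ht n).2) fun a s hs y hy => ?_
  have : (a, y) ∈ ⋂ n, U n := mem_iInter.2 fun n => by
    obtain ⟨x, -, hx⟩ := (hs n).1
    refine hWU n (closure_mono (hx ▸ hVW n x) ?_)
    rw [closure_prod_eq]
    exact ⟨subset_closure (hs n).2, hy n⟩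
  rw [hUd] at this
  exact this.symm

theorem Set.encard_pair_le_two {α : Type*} (a b : α) : ({a, b} : Set α).encard ≤ 2 :=
  (encard_insert_le _ _).trans (by simp [one_add_one_eq_two])

theorem Set.exists_eq_pair_of_encard_le_two {α : Type*} {A : Set α} {a : α} (ha : a ∈ A)
    (hA : A.encard ≤ 2) : ∃ b, A = {a, b} := by
  have h1 : (A \ {a}).encard ≤ 1 := by
    rw [← encard_sdiff_singleton_add_one ha] at hA
    exact (ENat.add_le_add_iff_right ENat.one_ne_top).1 (by simpa [one_add_one_eq_two] using hA)
  rcases encard_le_one_iff_eq.1 h1 with h | ⟨b, hb⟩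
  · refine ⟨a, ?_⟩
    rw [pair_eq_singleton]
    exact Subset.antisymm (sdiff_eq_empty.1 h) (singleton_subset_iff.2 ha)
  · exact ⟨b, by rw [← hb, insert_sdiff_singleton, insert_eq_of_mem ha]⟩

namespace Fell

attribute [local instance] fellTopology

section

variable {X : Type u} [TopologicalSpace X]

def hitting (U : Set X) : Set (Set X) := {H | (H ∩ U).Nonempty}

def missing (K : Set X) : Set (Set X) := {H | H ⊆ Kᶜ}

theorem isOpen_hitting {U : Set X} (hU : IsOpen U) : IsOpen (hitting U) :=
  isOpen_generateFrom_of_mem (Or.inl ⟨U, hU, rfl⟩)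

theorem isOpen_missing {K : Set X} (hK : IsCompact K) : IsOpen (missing K) :=
  isOpen_generateFrom_of_mem (Or.inr ⟨K, hK, rfl⟩)

theorem isInducing_val (S : Set (Set X)) : IsInducing (Subtype.val : FellHyper X S → Set X) :=
  ⟨rfl⟩

theorem continuous_pair [T2Space X] : Continuous fun p : X × X => ({p.1, p.2} : Set X) := by
  refine continuous_generateFrom_iff.2 ?_
  rintro _ (⟨U, hU, rfl⟩ | ⟨K, hK, rfl⟩)
  · have : (fun p : X × X => ({p.1, p.2} : Set X)) ⁻¹' {H | (H ∩ U).Nonempty} =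
        U ×ˢ univ ∪ univ ×ˢ U := by
      ext ⟨a, b⟩
      simp [Set.Nonempty]
    rw [this]
    exact (hU.prod isOpen_univ).union (isOpen_univ.prod hU)
  · have : (fun p : X × X => ({p.1, p.2} : Set X)) ⁻¹' {H | H ⊆ Kᶜ} = Kᶜ ×ˢ Kᶜ := by
      ext ⟨a, b⟩
      simp [insert_subset_iff]
    rw [this]
    exact hK.isClosed.isOpen_compl.prod hK.isClosed.isOpen_compl

theorem continuous_singleton [T2Space X] : Continuous fun x : X => ({x} : Set X) :=
  (continuous_pair.comp (continuous_id.prodMk continuous_id)).congr pair_eq_singleton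

theorem isInducing_singleton [T2Space X] : IsInducing fun x : X => ({x} : Set X) := by
  refine ⟨le_antisymm (continuous_iff_le_induced.1 continuous_singleton) fun V hV => ?_⟩
  exact isOpen_induced_iff.2 ⟨hitting V, isOpen_hitting hV, by ext; simp [hitting]⟩

theorem isInducing_singleton_fellHyper [T2Space X] {S : Set (Set X)} (hS : ∀ x : X, {x} ∈ S) :
    IsInducing (Y := FellHyper X S) fun x => ⟨{x}, hS x⟩ :=
  (isInducing_val S).of_comp_iff.1 isInducing_singleton

theorem isClosed_setOf_subsingleton [T2Space X] : IsClosed {A : Set X | A.Subsingleton} := by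
  refine isOpen_compl_iff.1 (isOpen_iff_forall_mem_open.2 fun A hA => ?_)
  obtain ⟨a, ha, b, hb, hab⟩ := not_subsingleton_iff.1 hA
  obtain ⟨U, V, hU, hV, haU, hbV, hUV⟩ := t2_separation hab
  refine ⟨hitting U ∩ hitting V, ?_, (isOpen_hitting hU).inter (isOpen_hitting hV),
    ⟨a, ha, haU⟩, ⟨b, hb, hbV⟩⟩
  rintro B ⟨⟨c, hcB, hcU⟩, ⟨d, hdB, hdV⟩⟩ hB
  exact hUV.ne_of_mem hcU hdV (hB hcB hdB)

theorem t1Space_fellHyper {S : Set (Set X)} (hS : ∀ A ∈ S, IsClosed A) :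
    T1Space (FellHyper X S) := by
  have hval := (isInducing_val S).continuous
  refine t1Space_iff_exists_open.2 fun A B hAB => ?_
  obtain ⟨x, ⟨hxA, hxB⟩ | ⟨hxB, hxA⟩⟩ := symmDiff_nonempty.2 (Subtype.coe_ne_coe.2 hAB)
  · exact ⟨_, (isOpen_hitting (hS _ B.2).isOpen_compl).preimage hval, ⟨x, hxA, hxB⟩,
      fun ⟨y, hyB, hy⟩ => hy hyB⟩
  · refine ⟨_, (isOpen_missing isCompact_singleton).preimage hval, ?_, fun h => h hxB rfl⟩
    rintro y hy rfl
    exact hxA hy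

theorem exists_isCompact_forall_pair_mem {O : Set (Set X)} (hO : IsOpen O) {x : X}
    (hx : {x} ∈ O) : ∃ K : Set X, IsCompact K ∧ ∀ z ∉ K, ({x, z} : Set X) ∈ O := by
  obtain ⟨_, ⟨f, ⟨hf, hfsub⟩, rfl⟩, hxf, hfO⟩ :=
    (isTopologicalBasis_of_subbasis rfl).exists_subset_of_mem_open hx hO
  have hsub : ∀ e ∈ f, ∃ K : Set X, IsCompact K ∧ ∀ z ∉ K, ({x, z} : Set X) ∈ e := by
    intro e he
    rcases hfsub he with ⟨U, -, rfl⟩ | ⟨K, hK, rfl⟩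
    · have hxU : x ∈ U := by simpa using hxf _ he
      exact ⟨∅, isCompact_empty, fun z _ => ⟨x, Or.inl rfl, hxU⟩⟩
    · refine ⟨K, hK, fun z hz => insert_subset_iff.2 ⟨hxf _ he rfl, ?_⟩⟩
      simpa using hz
  choose! K hK hKpair using hsub
  refine ⟨⋃ e ∈ f, K e, hf.isCompact_biUnion hK, fun z hz => hfO fun e he => ?_⟩
  exact hKpair e he z fun hze => hz (mem_biUnion he hze)

theorem exists_pair_mem_disjoint [NoncompactSpace X] {K : Set X} (hK : IsCompact K)
    {O : Set (Set X)} (hO : IsOpen O) (hsing : ∀ x : X, {x} ∈ O) :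
    ∃ x y : X, x ≠ y ∧ ({x, y} : Set X) ∈ O ∧ Disjoint {x, y} K := by
  obtain ⟨x, hxK⟩ := (ne_univ_iff_exists_notMem K).1 hK.ne_univ
  obtain ⟨L, hL, hLpair⟩ := exists_isCompact_forall_pair_mem hO (hsing x)
  obtain ⟨y, hy⟩ :=
    (ne_univ_iff_exists_notMem _).1 ((hK.union hL).union isCompact_singleton).ne_univ
  simp only [mem_union, mem_singleton_iff, not_or] at hy
  exact ⟨x, y, Ne.symm hy.2, hLpair y hy.1.2,
    disjoint_insert_left.2 ⟨hxK, disjoint_singleton_left.2 hy.1.1⟩⟩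

theorem exists_isOpen_forall_singleton_mem_of_locallyFinite {ι : Type*} {A : ι → Set X}
    (hA : LocallyFinite A) (hfin : ∀ i, (A i).Finite) (hnt : ∀ i, (A i).Nontrivial) :
    ∃ 𝒱 : Set (Set X), IsOpen 𝒱 ∧ (∀ z : X, {z} ∈ 𝒱) ∧ ∀ i, A i ∉ 𝒱 := by
  choose t ht htfin using hA
  let L (z : X) : Set X := (⋃ i ∈ {i | (A i ∩ t z).Nonempty}, A i) \ {z}
  refine ⟨⋃ z, hitting (interior (t z)) ∩ missing (L z),
    isOpen_iUnion fun z => (isOpen_hitting isOpen_interior).inter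
      (isOpen_missing (((htfin z).biUnion fun i _ => hfin i).sdiff).isCompact),
    fun z => mem_iUnion.2 ⟨z, ⟨z, rfl, mem_interior_iff_mem_nhds.2 (ht z)⟩, ?_⟩, fun i hi => ?_⟩
  · rintro _ rfl ⟨-, h⟩
    exact h rfl
  · obtain ⟨z, ⟨w, hwA, hwt⟩, hmiss⟩ := mem_iUnion.1 hi
    obtain ⟨v, hvA, hvz⟩ := (hnt i).exists_ne z
    exact hmiss hvA ⟨mem_biUnion ⟨w, hwA, interior_subset hwt⟩ hvA, hvz⟩

variable {S : Set (Set X)}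

theorem exists_cofinal_isCompact_of_isD1 (hD : IsD1Space (FellHyper X S))
    (hpair : ∀ a b : X, ({a, b} : Set X) ∈ S) (hcl : ∀ A ∈ S, IsClosed A) (x : X) :
    ∃ M : ℕ → Set X, (∀ k, IsCompact (M k)) ∧
      ∀ L : Set X, IsCompact L → x ∉ L → ∃ k, L ⊆ M k := by
  have hx : {x} ∈ S := pair_eq_singleton x ▸ hpair x x
  have := t1Space_fellHyper hcl
  obtain ⟨O, hO, hxO, hbase⟩ := hD.exists_seq_of_isInducing (isInducing_val S)
    (F := {(⟨{x}, hx⟩ : FellHyper X S)}) (singleton_nonempty _)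
    (isClosed_singleton (X := FellHyper X S))
  choose M hM hMpair using fun k => exists_isCompact_forall_pair_mem (hO k) (hxO k rfl)
  refine ⟨M, hM, fun L hL hxL => ?_⟩
  obtain ⟨k, hk⟩ := hbase (missing L) (isOpen_missing hL) (by
    rintro _ rfl
    simpa [missing] using hxL)
  refine ⟨k, fun z hzL => by_contra fun hzM => ?_⟩
  exact hk (a := ⟨{x, z}, hpair x z⟩) (hMpair k z hzM) (Or.inr rfl) hzL

theorem isHemicompact_of_isD1 [T2Space X] [Nontrivial X] (hD : IsD1Space (FellHyper X S))
    (hpair : ∀ a b : X, ({a, b} : Set X) ∈ S) (hcl : ∀ A ∈ S, IsClosed A) :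
    IsHemicompact X := by
  obtain ⟨x, y, hxy⟩ := exists_pair_ne X
  obtain ⟨Mx, hMx, hcofx⟩ := exists_cofinal_isCompact_of_isD1 hD hpair hcl x
  obtain ⟨My, hMy, hcofy⟩ := exists_cofinal_isCompact_of_isD1 hD hpair hcl y
  obtain ⟨U, V, hU, hV, hxU, hyV, hUV⟩ := t2_separation hxy
  refine ⟨fun n => Mx n.unpair.1 ∪ My n.unpair.2, fun n => (hMx _).union (hMy _), fun K hK => ?_⟩
  obtain ⟨i, hi⟩ := hcofx (K \ U) (hK.diff hU) fun h => h.2 hxU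
  obtain ⟨j, hj⟩ := hcofy (K \ V) (hK.diff hV) fun h => h.2 hyV
  refine ⟨Nat.pair i j, fun z hz => ?_⟩
  simp only [Nat.unpair_pair]
  by_cases hzU : z ∈ U
  · exact Or.inr (hj ⟨hz, hUV.notMem_of_mem_left hzU⟩)
  · exact Or.inl (hi ⟨hz, hzU⟩)

theorem firstCountableTopology_of_isD1 [T2Space X] (hD : IsD1Space (FellHyper X S))
    (hpair : ∀ a b : X, ({a, b} : Set X) ∈ S) (hcl : ∀ A ∈ S, IsClosed A) :
    FirstCountableTopology X := by
  have := t1Space_fellHyper hcl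
  have := hD.firstCountableTopology
  exact (isInducing_singleton_fellHyper fun x => pair_eq_singleton x ▸ hpair x x)
    |>.firstCountableTopology

theorem exists_seq_of_isD1_subsingletons [T2Space X] [Nonempty X]
    (hD : IsD1Space (FellHyper X S)) (hpair : ∀ a b : X, ({a, b} : Set X) ∈ S) :
    ∃ O : ℕ → Set (Set X), (∀ k, IsOpen (O k)) ∧ (∀ k (x : X), {x} ∈ O k) ∧
      ∀ 𝒱 : Set (Set X), IsOpen 𝒱 → (∀ A ∈ S, A.Subsingleton → A ∈ 𝒱) →
        ∃ k, ∀ A ∈ S, A ∈ O k → A ∈ 𝒱 := by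
  have hsing (x : X) : {x} ∈ S := pair_eq_singleton x ▸ hpair x x
  obtain ⟨x⟩ := ‹Nonempty X›
  obtain ⟨O, hO, hF1O, hbase⟩ := hD.exists_seq_of_isInducing (isInducing_val S)
    (F := {A | A.1.Subsingleton}) ⟨⟨{x}, hsing x⟩, subsingleton_singleton⟩
    (isClosed_setOf_subsingleton.preimage (isInducing_val S).continuous)
  refine ⟨O, hO, fun k x => hF1O k (a := ⟨{x}, hsing x⟩) subsingleton_singleton,
    fun 𝒱 h𝒱 hF1𝒱 => ?_⟩
  obtain ⟨k, hk⟩ := hbase 𝒱 h𝒱 fun A hA => hF1𝒱 A.1 A.2 hA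
  exact ⟨k, fun A hAS hA => hk (a := ⟨A, hAS⟩) hA⟩

theorem compactSpace_of_isD1 [T2Space X] (hD : IsD1Space (FellHyper X S))
    (hpair : ∀ a b : X, ({a, b} : Set X) ∈ S) (hcl : ∀ A ∈ S, IsClosed A)
    (hne : ∀ A ∈ S, A.Nonempty) : CompactSpace X := by
  by_contra hcomp
  have := not_compactSpace_iff.1 hcomp
  rcases subsingleton_or_nontrivial X with _ | _
  · exact hcomp inferInstance
  have := firstCountableTopology_of_isD1 hD hpair hcl
  have hhemi := isHemicompact_of_isD1 hD hpair hcl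
  have := hhemi.weaklyLocallyCompactSpace
  have := hhemi.sigmaCompactSpace
  let K := CompactExhaustion.choice X
  obtain ⟨O, hO, hsingO, hbase⟩ := exists_seq_of_isD1_subsingletons hD hpair
  choose a b hab habO habK using fun k =>
    exists_pair_mem_disjoint (K.isCompact k) (hO k) (hsingO k)
  obtain ⟨𝒱, h𝒱, hsing𝒱, hpair𝒱⟩ := exists_isOpen_forall_singleton_mem_of_locallyFinite
    (K.locallyFinite_of_disjoint habK) (fun _ => toFinite _) fun k => nontrivial_pair (hab k)
  obtain ⟨k, hk⟩ := hbase 𝒱 h𝒱 fun A hAS hA => by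
    obtain ⟨z, rfl⟩ := hA.eq_empty_or_singleton.resolve_left (hne A hAS).ne_empty
    exact hsing𝒱 z
  exact hpair𝒱 k (hk _ (hpair _ _) (habO k))

theorem hasGdeltaDiagonal_of_isD1 [T2Space X] (hD : IsD1Space (FellHyper X S))
    (hpair : ∀ a b : X, ({a, b} : Set X) ∈ S) : HasGdeltaDiagonal X := by
  cases isEmpty_or_nonempty X
  · exact ⟨fun _ => univ, fun _ => isOpen_univ, Subsingleton.elim _ _⟩
  obtain ⟨O, hO, hsingO, hbase⟩ := exists_seq_of_isD1_subsingletons hD hpair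
  refine ⟨fun n => (fun p : X × X => ({p.1, p.2} : Set X)) ⁻¹' O n,
    fun n => (hO n).preimage continuous_pair, ?_⟩
  ext ⟨a, b⟩
  simp only [mem_iInter, mem_preimage]
  refine ⟨fun hab => by_contra fun hne => ?_, ?_⟩
  · have hmiss : IsOpen (missing {a} ∪ missing {b}) :=
      (isOpen_missing isCompact_singleton).union (isOpen_missing isCompact_singleton)
    obtain ⟨n, hn⟩ := hbase _ hmiss fun A _ hA => by
      by_cases haA : a ∈ A
      · exact Or.inr fun z hz (hzb : z = b) => hne (hA haA (hzb ▸ hz))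
      · exact Or.inl fun z hz (hza : z = a) => haA (hza ▸ hz)
    rcases hn _ (hpair a b) (hab n) with h | h
    · exact h (mem_insert a _) rfl
    · exact h (mem_insert_of_mem a rfl) rfl
  · rintro (rfl : a = b) n
    rw [pair_eq_singleton]
    exact hsingO n a

theorem compactSpace_and_metrizableSpace_of_isD1 [T2Space X] (hD : IsD1Space (FellHyper X S))
    (hpair : ∀ a b : X, ({a, b} : Set X) ∈ S) (hcl : ∀ A ∈ S, IsClosed A)
    (hne : ∀ A ∈ S, A.Nonempty) : CompactSpace X ∧ MetrizableSpace X := by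
  have := compactSpace_of_isD1 hD hpair hcl hne
  have := (hasGdeltaDiagonal_of_isD1 hD hpair).secondCountableTopology
  exact ⟨‹_›, metrizableSpace_of_t3_secondCountable X⟩

def lowerLimit (𝔘 : Ultrafilter (Set X)) : Set X :=
  {x | ∀ U : Set X, IsOpen U → x ∈ U → hitting U ∈ 𝔘}

theorem isClosed_lowerLimit (𝔘 : Ultrafilter (Set X)) : IsClosed (lowerLimit 𝔘) := by
  refine isOpen_compl_iff.1 (isOpen_iff_forall_mem_open.2 fun x hx => ?_)
  simp only [mem_compl_iff, lowerLimit, mem_ofPred_eq, not_forall] at hx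
  obtain ⟨U, hU, hxU, hU𝔘⟩ := hx
  exact ⟨U, fun y hyU hy => hU𝔘 (hy U hU hyU), hU, hxU⟩

theorem ultrafilter_le_nhds_lowerLimit (𝔘 : Ultrafilter (Set X)) :
    (𝔘 : Filter (Set X)) ≤ 𝓝 (lowerLimit 𝔘) := by
  rw [fellTopology, nhds_generateFrom]
  refine le_iInf₂ fun s ⟨hs, hsub⟩ => le_principal_iff.2 ?_
  rcases hsub with ⟨U, hU, rfl⟩ | ⟨K, hK, rfl⟩
  · obtain ⟨x, hx, hxU⟩ := hs
    exact hx U hU hxU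
  · have hcover : ∀ x ∈ K, ∃ U, IsOpen U ∧ x ∈ U ∧ hitting U ∉ 𝔘 := fun x hxK => by
      simpa [lowerLimit] using fun h => hs h hxK
    choose! U hU hxU hU𝔘 using hcover
    obtain ⟨t, htK, hKt⟩ :=
      hK.elim_nhds_subcover U fun x hx => (hU x hx).mem_nhds (hxU x hx)
    filter_upwards [(biInter_finset_mem t).2 fun x hx =>
      Ultrafilter.compl_mem_iff_notMem.2 (hU𝔘 x (htK x hx))] with A hA w hwA hwK
    obtain ⟨x, hxt, hwx⟩ := mem_iUnion₂.1 (hKt hwK)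
    exact mem_iInter₂.1 hA x hxt ⟨w, hwA, hwx⟩

theorem isCompact_of_forall_lowerLimit_mem
    (hS : ∀ 𝔘 : Ultrafilter (Set X), S ∈ 𝔘 → lowerLimit 𝔘 ∈ S) : IsCompact S :=
  isCompact_iff_ultrafilter_le_nhds.2 fun 𝔘 h𝔘 =>
    ⟨_, hS 𝔘 (le_principal_iff.1 h𝔘), ultrafilter_le_nhds_lowerLimit 𝔘⟩

theorem isCompact_CL [CompactSpace X] : IsCompact (CL X) := by
  refine isCompact_of_forall_lowerLimit_mem fun 𝔘 h𝔘 => ⟨?_, isClosed_lowerLimit 𝔘⟩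
  refine nonempty_iff_ne_empty.2 fun h => ?_
  have hmiss : missing univ ∈ 𝔘 := ultrafilter_le_nhds_lowerLimit 𝔘 <|
    (isOpen_missing isCompact_univ).mem_nhds (by simp [missing, h])
  obtain ⟨A, ⟨⟨a, ha⟩, -⟩, hA⟩ := 𝔘.nonempty_of_mem (inter_mem h𝔘 hmiss)
  exact hA ha (mem_univ a)

theorem isCompact_Fn_two [CompactSpace X] [T2Space X] : IsCompact (Fn X 2) := by
  have : Fn X 2 = range fun p : X × X => ({p.1, p.2} : Set X) := by
    ext A
    constructor
    · rintro ⟨⟨a, ha⟩, hA⟩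
      obtain ⟨b, rfl⟩ := exists_eq_pair_of_encard_le_two ha hA
      exact ⟨(a, b), rfl⟩
    · rintro ⟨⟨a, b⟩, rfl⟩
      exact ⟨insert_nonempty _ _, encard_pair_le_two a b⟩
  rw [this]
  exact isCompact_range continuous_pair

end

section

variable {X : Type u} [MetricSpace X] [ProperSpace X] {S : Set (Set X)}

theorem continuous_infDist (hne : ∀ A ∈ S, A.Nonempty) (x : X) :
    Continuous fun A : FellHyper X S => Metric.infDist x A.1 := by
  have hval := (isInducing_val S).continuous
  refine continuous_iff_lower_upperSemicontinuous.2
    ⟨lowerSemicontinuous_iff_isOpen_preimage.2 fun r => ?_,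
      upperSemicontinuous_iff_isOpen_preimage.2 fun r => ?_⟩
  · have : (fun A : FellHyper X S => Metric.infDist x A.1) ⁻¹' Ioi r =
        ⋃ r' > r, (Subtype.val ⁻¹' missing (Metric.closedBall x r') : Set (FellHyper X S)) := by
      ext A
      simp only [mem_preimage, mem_Ioi, mem_iUnion, missing, exists_prop]
      constructor
      · intro h
        refine ⟨(r + Metric.infDist x A.1) / 2, by linarith, fun a ha hax => ?_⟩
        have := Metric.infDist_le_dist_of_mem ha (x := x)
        rw [Metric.mem_closedBall, dist_comm] at hax
        linarith
      · rintro ⟨r', hr', hA⟩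
        refine hr'.trans_le ((Metric.le_infDist (hne _ A.2)).2 fun a ha => ?_)
        have := hA ha
        rw [mem_compl_iff, Metric.mem_closedBall, not_le, dist_comm] at this
        exact this.le
    rw [this]
    exact isOpen_biUnion fun r' _ => (isOpen_missing (isCompact_closedBall x r')).preimage hval
  · have : (fun A : FellHyper X S => Metric.infDist x A.1) ⁻¹' Iio r =
        Subtype.val ⁻¹' hitting (Metric.ball x r) := by
      ext A
      simp only [mem_preimage, mem_Iio, Metric.infDist_lt_iff (hne _ A.2)]
      exact ⟨fun ⟨a, ha, hxa⟩ => ⟨a, ha, Metric.mem_ball'.2 hxa⟩,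
        fun ⟨a, ha, hxa⟩ => ⟨a, ha, Metric.mem_ball'.1 hxa⟩⟩
    rw [this]
    exact (isOpen_hitting Metric.isOpen_ball).preimage hval

theorem metrizableSpace_fellHyper [CompactSpace (FellHyper X S)] (hne : ∀ A ∈ S, A.Nonempty)
    (hcl : ∀ A ∈ S, IsClosed A) : MetrizableSpace (FellHyper X S) := by
  obtain ⟨D, hDc, hD⟩ := exists_countable_dense X
  have := hDc.to_subtype
  let f : FellHyper X S → D → ℝ := fun A q => Metric.infDist (q : X) A.1
  have hf : Continuous f := continuous_pi fun q => continuous_infDist hne q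
  have hinj : Function.Injective f := by
    intro A B hAB
    have : (Metric.infDist · A.1) = (Metric.infDist · B.1) :=
      Continuous.ext_on hD (Metric.continuous_infDist_pt _) (Metric.continuous_infDist_pt _)
        fun q hq => congrFun hAB ⟨q, hq⟩
    apply Subtype.ext
    rw [← (hcl _ A.2).closure_eq, ← (hcl _ B.2).closure_eq]
    ext x
    rw [Metric.mem_closure_iff_infDist_zero (hne _ A.2),
      Metric.mem_closure_iff_infDist_zero (hne _ B.2), congrFun this x]
  exact (hf.isClosedEmbedding hinj).isEmbedding.metrizableSpace

theorem isD1Space_fellHyper (hS : IsCompact S) (hne : ∀ A ∈ S, A.Nonempty)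
    (hcl : ∀ A ∈ S, IsClosed A) : IsD1Space (FellHyper X S) := by
  have : CompactSpace (FellHyper X S) := isCompact_iff_compactSpace.1 hS
  have := metrizableSpace_fellHyper hne hcl
  exact IsD1Space.of_compactSpace_of_metrizableSpace _

end

end Fell

/-- characterization of spaces whose Fell hyperspaces are `D₁`-spaces. -/
theorem statement4 (X : Type u) [TopologicalSpace X] [T1Space X] [RegularSpace X] :
    List.TFAE
      [IsD1Space (FellHyper X (CL X)),
       IsD1Space (FellHyper X (Kcal X)),
       ∃ n, 2 ≤ n ∧ IsD1Space (FellHyper X (Fn X n)),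
       CompactSpace X ∧ TopologicalSpace.MetrizableSpace X] := by
  tfae_have 1 → 4 := fun h => Fell.compactSpace_and_metrizableSpace_of_isD1 h
    (fun a b => ⟨insert_nonempty _ _, (toFinite _).isClosed⟩) (fun _ hA => hA.2) (fun _ hA => hA.1)
  tfae_have 2 → 4 := fun h => Fell.compactSpace_and_metrizableSpace_of_isD1 h
    (fun a b => ⟨insert_nonempty _ _, (toFinite _).isCompact⟩) (fun _ hA => hA.2.isClosed)
    (fun _ hA => hA.1)
  tfae_have 3 → 4 := fun ⟨n, hn, h⟩ => Fell.compactSpace_and_metrizableSpace_of_isD1 h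
    (fun a b => ⟨insert_nonempty _ _, (encard_pair_le_two a b).trans (by exact_mod_cast hn)⟩)
    (fun _ hA => (finite_of_encard_le_coe hA.2).isClosed) (fun _ hA => hA.1)
  tfae_have 4 → 1 := fun ⟨_, _⟩ => by
    let := metrizableSpaceMetric X
    exact Fell.isD1Space_fellHyper Fell.isCompact_CL (fun _ hA => hA.1) (fun _ hA => hA.2)
  tfae_have 4 → 2 := fun ⟨_, _⟩ => by
    let := metrizableSpaceMetric X
    rw [show Kcal X = CL X from ext fun A => and_congr_right fun _ =>
      ⟨IsCompact.isClosed, IsClosed.isCompact⟩]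
    exact Fell.isD1Space_fellHyper Fell.isCompact_CL (fun _ hA => hA.1) (fun _ hA => hA.2)
  tfae_have 4 → 3 := fun ⟨_, _⟩ => by
    let := metrizableSpaceMetric X
    exact ⟨2, le_rfl, Fell.isD1Space_fellHyper Fell.isCompact_Fn_two (fun _ hA => hA.1)
      (fun _ hA => (finite_of_encard_le_coe hA.2).isClosed)⟩
  tfae_finish
end

section
/- Let X be a T1 regular space. The hyperspace F(X) of all nonempty finite subsets of X, equipped with the Vietoris topology, is a D_1-space if and only if X is discrete. -/
open Set TopologicalSpace

universe u v

/-!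
If `x` is not isolated in `X`, the closed set `C = {A | x ∈ A}` of `ℱ(X)` has no countable
neighbourhood base. Given open sets `Bₙ ⊇ C`, continuity of `p ↦ insert p s` for the Vietoris
topology lets us pick distinct points `yₙ ≠ x` with `Kₙ = {y₀, …, yₙ} ∈ Bₙ`. The open set
`V = ⋃ₘ {H | yₘ ∉ H ∧ ¬ H ⊆ Kₘ}` contains `C`, because every finite set misses some `yₘ`, but it
contains no `Kₙ`: `yₘ ∈ Kₙ` when `m ≤ n`, and `Kₙ ⊆ Kₘ` when `n < m`.
Conversely, over a discrete space every finite set is isolated in the Vietoris topology.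
-/

open Filter Topology Function

attribute [local instance] TopologicalSpace.vietoris

theorem exists_seq_forall_image_Iio {α : Type*} (P : ℕ → Set α → α → Prop)
    (h : ∀ n (s : Finset α), ∃ a, P n s a) : ∃ y : ℕ → α, ∀ n, P n (y '' Iio n) (y n) := by
  classical
  choose f hf using h
  let K : ℕ → Finset α := fun n =>
    Nat.rec (motive := fun _ => Finset α) ∅ (fun k s => insert (f k s) s) n
  have hK : ∀ n, (K n : Set α) = (fun n => f n (K n)) '' Iio n := by
    intro n
    induction n with
    | zero => simp [K]
    | succ k ih =>
      rw [Iio_add_one_eq_Iic, ← Iio_insert, image_insert_eq, ← ih]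
      simp [K]
  exact ⟨fun n => f n (K n), fun n => hK n ▸ hf n (K n)⟩

namespace TopologicalSpace.vietoris

variable {X : Type u} [TopologicalSpace X]

theorem isOpen_singleton_of_finite [DiscreteTopology X] {A : Set X} (hA : A.Finite) :
    IsOpen ({A} : Set (Set X)) := by
  convert (isOpen_discrete A).powerset_vietoris.inter (hA.isOpen_biInter fun a _ =>
    isOpen_inter_nonempty_of_isOpen (isOpen_discrete {a}))
  ext H
  simp [subset_antisymm_iff, subset_def]

theorem isClosed_setOf_mem [T1Space X] (x : X) : IsClosed {s : Set X | x ∈ s} := by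
  simpa using isClosed_inter_nonempty_of_isClosed (isClosed_singleton (x := x))

theorem continuous_insert (s : Set X) : Continuous fun p : X => insert p s := by
  simp only [insert_eq]
  fun_prop

theorem exists_ne_notMem_insert_mem [T1Space X] {x : X} (hx : (𝓝[≠] x).NeBot)
    {W : Set (Set X)} (hW : IsOpen W) {s : Set X} (hs : s.Finite) (h : insert x s ∈ W) :
    ∃ p, p ≠ x ∧ p ∉ s ∧ insert p s ∈ W := by
  have hW' : ∀ᶠ p in 𝓝[≠] x, insert p s ∈ W :=
    nhdsWithin_le_nhds (((continuous_insert s).isOpen_preimage W hW).mem_nhds h)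
  have hs' : ∀ᶠ p in 𝓝[≠] x, p ∉ s := nhdsNE_le_cofinite x hs.compl_mem_cofinite
  have hx' : ∀ᶠ p in 𝓝[≠] x, p ∈ ({x}ᶜ : Set X) := eventually_mem_nhdsWithin
  exact (hx'.and (hs'.and hW')).exists

theorem exists_isOpen_finite_mem_and_image_Iic_notMem [T1Space X] {x : X} {y : ℕ → X}
    (hy : Injective y) (hyx : ∀ n, y n ≠ x) :
    ∃ V : Set (Set X), IsOpen V ∧ (∀ A : Set X, A.Finite → x ∈ A → A ∈ V) ∧
      ∀ n, y '' Iic n ∉ V := by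
  refine ⟨⋃ m, {H | H ⊆ {y m}ᶜ} ∩ {H | (H ∩ (y '' Iic m)ᶜ).Nonempty}, ?_,
    fun A hA hxA => ?_, fun n hn => ?_⟩
  · exact isOpen_iUnion fun m => isOpen_compl_singleton.powerset_vietoris.inter
      (isOpen_inter_nonempty_of_isOpen ((finite_Iic m).image y).isClosed.isOpen_compl)
  · obtain ⟨_, ⟨m, rfl⟩, hm⟩ := (infinite_range_of_injective hy).exists_notMem_finite hA
    refine mem_iUnion.2 ⟨m, fun a ha => ne_of_mem_of_not_mem ha hm, x, hxA, ?_⟩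
    rintro ⟨i, -, hi⟩
    exact hyx i hi
  · obtain ⟨m, hsub, hnot⟩ := mem_iUnion.1 hn
    rcases le_or_gt m n with hmn | hnm
    · exact hsub (mem_image_of_mem y (mem_Iic.2 hmn)) rfl
    · exact inter_compl_nonempty_iff.1 hnot (image_mono (Iic_subset_Iic.2 hnm.le))

end TopologicalSpace.vietoris

namespace VietorisHyper

open TopologicalSpace.vietoris

variable {X : Type u} [TopologicalSpace X]

theorem vietorisTopology_eq_vietoris : vietorisTopology X = TopologicalSpace.vietoris X := by
  unfold vietorisTopology TopologicalSpace.vietoris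
  congr 1
  ext S
  simp [eq_comm, powerset]

theorem isInducing_carrier (S : Set (Set X)) :
    IsInducing (carrier : VietorisHyper X S → Set X) :=
  ⟨by rw [← vietorisTopology_eq_vietoris]; rfl⟩

instance [DiscreteTopology X] : DiscreteTopology (VietorisHyper X (Fcal X)) := by
  refine discreteTopology_iff_isOpen_singleton.2 fun A => (isInducing_carrier _).isOpen_iff.2
    ⟨{A.carrier}, isOpen_singleton_of_finite A.2.2, ?_⟩
  ext B
  exact Subtype.ext_iff.symm

theorem discreteTopology_of_isD1Space [T1Space X] (hD : IsD1Space (VietorisHyper X (Fcal X))) :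
    DiscreteTopology X := by
  refine discreteTopology_iff_nhds_ne.2 fun x => not_neBot.1 fun hx => ?_
  have hcarrier := (isInducing_carrier (X := X) (Fcal X)).continuous
  obtain ⟨B, hB, hB_basis⟩ := hD {A | x ∈ A.carrier}
    ⟨⟨{x}, singleton_nonempty x, finite_singleton x⟩, rfl⟩
    ((isClosed_setOf_mem x).preimage hcarrier)
  choose W hW hWB using fun n => (isInducing_carrier _).isOpen_iff.1 (hB n).1
  have hxW : ∀ n (s : Finset X), insert x ↑s ∈ W n := fun n s => by
    have : (⟨insert x s, insert_nonempty x _, s.finite_toSet.insert x⟩ :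
      VietorisHyper X (Fcal X)) ∈ B n := (hB n).2 (mem_insert x _)
    rwa [← hWB n] at this
  obtain ⟨y, hy⟩ := exists_seq_forall_image_Iio (fun n s p => p ≠ x ∧ p ∉ s ∧ insert p s ∈ W n)
    fun n s => exists_ne_notMem_insert_mem hx (hW n) s.finite_toSet (hxW n s)
  have hy_inj : Injective y := .of_lt_imp_ne fun m n hmn h => (hy n).2.1 ⟨m, hmn, h⟩
  obtain ⟨V, hV, hCV, hyV⟩ :=
    exists_isOpen_finite_mem_and_image_Iic_notMem hy_inj fun n => (hy n).1
  obtain ⟨n, hn⟩ := hB_basis (carrier ⁻¹' V) (hV.preimage hcarrier) fun A hA => hCV _ A.2.2 hA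
  have hyB : (⟨y '' Iic n, nonempty_Iic.image y, (finite_Iic n).image y⟩ :
      VietorisHyper X (Fcal X)) ∈ B n := by
    rw [← hWB n]
    change y '' Iic n ∈ W n
    rw [← Iio_insert, image_insert_eq]
    exact (hy n).2.2
  exact hyV n (hn hyB)

end VietorisHyper

theorem isD1Space_of_discreteTopology (Y : Type v) [TopologicalSpace Y] [DiscreteTopology Y] :
    IsD1Space Y :=
  fun F _ _ => ⟨fun _ => F, fun _ => ⟨isOpen_discrete F, subset_rfl⟩, fun _ _ hFV => ⟨0, hFV⟩⟩

theorem statement6_general (X : Type u) [TopologicalSpace X] [T1Space X] :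
    IsD1Space (VietorisHyper X (Fcal X)) ↔ DiscreteTopology X :=
  ⟨VietorisHyper.discreteTopology_of_isD1Space, fun _ => isD1Space_of_discreteTopology _⟩

/-- `ℱ(X)` with the Vietoris topology is a `D₁`-space iff `X` is discrete. -/
theorem statement6 (X : Type u) [TopologicalSpace X] [T1Space X] [RegularSpace X] :
    IsD1Space (VietorisHyper X (Fcal X)) ↔ DiscreteTopology X :=
  statement6_general X
end

section
/- Let X be a T1 regular space. The hyperspace F(X) of all nonempty finite subsets of X, equipped with the Fell topology, is a D_1-space if and only if X is finite. -/
open Set TopologicalSpace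

universe u v

/-! If `X` is finite then so is `ℱ(X)`, and every finite space is `D₁`. Suppose `X` is infinite.
A basic Fell neighbourhood of a finite set `A` only asks to meet finitely many open sets that
meet `A` and to avoid a compact set disjoint from `A`.

If `X` is discrete, compact sets are finite, so the `n`-th member of a putative countable base at
the closed set of singletons contains a pair `{aₙ, bₙ}`, and the pairs can be chosen disjoint.
The sets `{A | x ∈ A, A avoids the partner of x}` then cover the singletons but contain no pair.

Otherwise some `p` is not isolated, and we use the closed set `{A | p ∈ A}`. Fix distinct points
`xₖ ≠ p`. Moving `p` slightly inside `{p, x₀, …, xₙ}` gives a member `wₙ` of the `n`-th base set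
with `p ∉ wₙ` and `x₀, …, xₙ ∈ wₙ`. The open set of all `A` that, for some `k`, meet
`(w₀ ∪ ⋯ ∪ wₖ₋₁)ᶜ` and miss `xₖ` contains every `A ∋ p` (take `xₖ ∉ A`), but no `wₙ`. -/

open Function Topology

/-- The basic Fell-open set `U₁⁻ ∩ ⋯ ∩ Uₙ⁻ ∩ (Kᶜ)⁺` for `T = {U₁, …, Uₙ}`. -/
def fellBox {X : Type u} (T : Set (Set X)) (K : Set X) : Set (Set X) :=
  {H | (∀ U ∈ T, (H ∩ U).Nonempty) ∧ Disjoint H K}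

theorem fellBox_union {X : Type u} (T₁ T₂ : Set (Set X)) (K₁ K₂ : Set X) :
    fellBox (T₁ ∪ T₂) (K₁ ∪ K₂) = fellBox T₁ K₁ ∩ fellBox T₂ K₂ := by
  ext H
  simp only [fellBox, mem_ofPred_eq, mem_inter_iff, mem_union, disjoint_union_right, or_imp,
    forall_and]
  tauto

theorem exists_fellBox_subset_of_isOpen {X : Type u} [TopologicalSpace X] {𝒱 : Set (Set X)}
    (h𝒱 : IsOpen[fellTopology X] 𝒱) {H : Set X} (hH : H ∈ 𝒱) :
    ∃ T K, T.Finite ∧ (∀ U ∈ T, IsOpen U) ∧ IsCompact K ∧ H ∈ fellBox T K ∧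
      fellBox T K ⊆ 𝒱 := by
  change GenerateOpen _ 𝒱 at h𝒱
  induction h𝒱 generalizing H with
  | basic 𝒮 h𝒮 =>
    rcases h𝒮 with ⟨U, hU, rfl⟩ | ⟨K, hK, rfl⟩
    · exact ⟨{U}, ∅, finite_singleton U, by simpa, isCompact_empty,
        ⟨by simpa, disjoint_empty H⟩, fun H' hH' => hH'.1 U rfl⟩
    · exact ⟨∅, K, finite_empty, by simp, hK, ⟨by simp, subset_compl_iff_disjoint_right.mp hH⟩,
        fun H' hH' => subset_compl_iff_disjoint_right.mpr hH'.2⟩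
  | univ => exact ⟨∅, ∅, finite_empty, by simp, isCompact_empty, ⟨by simp, disjoint_empty H⟩,
      subset_univ _⟩
  | inter 𝒮 𝒯 _ _ ih𝒮 ih𝒯 =>
    obtain ⟨T₁, K₁, hT₁, hU₁, hK₁, hH₁, h₁⟩ := ih𝒮 hH.1
    obtain ⟨T₂, K₂, hT₂, hU₂, hK₂, hH₂, h₂⟩ := ih𝒯 hH.2
    refine ⟨T₁ ∪ T₂, K₁ ∪ K₂, hT₁.union hT₂, fun U hU => hU.elim (hU₁ U) (hU₂ U),
      hK₁.union hK₂, ?_, ?_⟩ <;> rw [fellBox_union]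
    exacts [⟨hH₁, hH₂⟩, inter_subset_inter h₁ h₂]
  | sUnion 𝔖 _ ih =>
    obtain ⟨𝒮, h𝒮, hH𝒮⟩ := hH
    obtain ⟨T, K, hT, hU, hK, hHbox, hbox⟩ := ih 𝒮 h𝒮 hH𝒮
    exact ⟨T, K, hT, hU, hK, hHbox, hbox.trans (subset_sUnion_of_mem h𝒮)⟩

namespace FellHyper

variable {X : Type u} [TopologicalSpace X] {S : Set (Set X)}

theorem finite_carrier (A : FellHyper X (Fcal X)) : A.carrier.Finite :=
  A.2.2

theorem nonempty_carrier (A : FellHyper X (Fcal X)) : A.carrier.Nonempty :=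
  A.2.1

theorem isOpen_setOf_inter_nonempty {U : Set X} (hU : IsOpen U) :
    IsOpen {A : FellHyper X S | (A.carrier ∩ U).Nonempty} :=
  ⟨_, .basic _ (.inl ⟨U, hU, rfl⟩), rfl⟩

theorem isOpen_setOf_disjoint {K : Set X} (hK : IsCompact K) :
    IsOpen {A : FellHyper X S | Disjoint A.carrier K} := by
  simp_rw [← subset_compl_iff_disjoint_right]
  exact ⟨_, .basic _ (.inr ⟨K, hK, rfl⟩), rfl⟩

theorem isClosed_setOf_mem (p : X) : IsClosed {A : FellHyper X S | p ∈ A.carrier} := by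
  rw [← isOpen_compl_iff, compl_ofPred]
  simpa only [disjoint_singleton_right] using isOpen_setOf_disjoint (S := S) isCompact_singleton

theorem isClosed_setOf_subsingleton [T2Space X] :
    IsClosed {A : FellHyper X S | A.carrier.Subsingleton} := by
  refine isOpen_compl_iff.mp (isOpen_iff_forall_mem_open.mpr fun A hA => ?_)
  obtain ⟨a, ha, b, hb, hab⟩ : ∃ a ∈ A.carrier, ∃ b ∈ A.carrier, a ≠ b := by
    simpa [Set.Subsingleton] using hA
  obtain ⟨U, V, hU, hV, haU, hbV, hUV⟩ := t2_separation hab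
  refine ⟨{B | (B.carrier ∩ U).Nonempty} ∩ {B | (B.carrier ∩ V).Nonempty}, ?_,
    (isOpen_setOf_inter_nonempty hU).inter (isOpen_setOf_inter_nonempty hV),
    ⟨a, ha, haU⟩, ⟨b, hb, hbV⟩⟩
  rintro B ⟨⟨y, hyB, hyU⟩, ⟨z, hzB, hzV⟩⟩ hB
  exact hUV.ne_of_mem hyU hzV (hB hyB hzB)

theorem exists_fellBox_subset {𝒲 : Set (FellHyper X S)} (h𝒲 : IsOpen 𝒲) {A : FellHyper X S}
    (hA : A ∈ 𝒲) :
    ∃ T K, T.Finite ∧ (∀ U ∈ T, IsOpen U) ∧ IsCompact K ∧ A.carrier ∈ fellBox T K ∧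
      ∀ B : FellHyper X S, B.carrier ∈ fellBox T K → B ∈ 𝒲 := by
  obtain ⟨𝒱, h𝒱, rfl⟩ := h𝒲
  obtain ⟨T, K, hT, hU, hK, hA, hbox⟩ := exists_fellBox_subset_of_isOpen h𝒱 hA
  exact ⟨T, K, hT, hU, hK, hA, fun B hB => hbox hB⟩

theorem exists_finite_forall_superset_mem [DiscreteTopology X] {𝒲 : Set (FellHyper X S)}
    (h𝒲 : IsOpen 𝒲) {A : FellHyper X S} (hA : A ∈ 𝒲) :
    ∃ K : Set X, K.Finite ∧ Disjoint A.carrier K ∧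
      ∀ B : FellHyper X S, A.carrier ⊆ B.carrier → Disjoint B.carrier K → B ∈ 𝒲 := by
  obtain ⟨T, K, -, -, hK, ⟨hAT, hAK⟩, hbox⟩ := exists_fellBox_subset h𝒲 hA
  exact ⟨K, hK.finite_of_discrete, hAK, fun B hAB hBK =>
    hbox B ⟨fun U hU => (hAT U hU).mono (inter_subset_inter_left U hAB), hBK⟩⟩

theorem exists_isOpen_subsingleton_subset_forall_notMem [DiscreteTopology X] {ι : Type*}
    (w : ι → FellHyper X (Fcal X)) (hw : ∀ i, (w i).carrier.Nontrivial)
    (hfin : ∀ x, {i | x ∈ (w i).carrier}.Finite) :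
    ∃ 𝒱 : Set (FellHyper X (Fcal X)), IsOpen 𝒱 ∧ {A | A.carrier.Subsingleton} ⊆ 𝒱 ∧
      ∀ i, w i ∉ 𝒱 := by
  let partners : X → Set X := fun x => (⋃ i ∈ {i | x ∈ (w i).carrier}, (w i).carrier) \ {x}
  have hpartners (x : X) : IsCompact (partners x) :=
    (((hfin x).biUnion fun i _ => (w i).finite_carrier).sdiff).isCompact
  refine ⟨⋃ x, {A | (A.carrier ∩ {x}).Nonempty} ∩ {A | Disjoint A.carrier (partners x)},
    isOpen_iUnion fun x => (isOpen_setOf_inter_nonempty (isOpen_discrete _)).inter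
      (isOpen_setOf_disjoint (hpartners x)), fun A hA => ?_, fun i hi => ?_⟩
  · obtain ⟨x, hx⟩ := A.nonempty_carrier
    exact mem_iUnion.mpr ⟨x, ⟨x, hx, rfl⟩, disjoint_left.mpr fun y hy hyx => hyx.2 (hA hy hx)⟩
  · obtain ⟨x, ⟨z, hz, hzx⟩, hdisj⟩ := mem_iUnion.mp hi
    have hx : x ∈ (w i).carrier := mem_singleton_iff.mp hzx ▸ hz
    obtain ⟨y, hy, hyx⟩ := (hw i).exists_ne x
    exact disjoint_left.mp hdisj hy ⟨mem_biUnion hx hy, hyx⟩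

theorem exists_mem_notMem_of_not_isOpen_singleton [T2Space X] {𝒲 : Set (FellHyper X (Fcal X))}
    (h𝒲 : IsOpen 𝒲) {A : FellHyper X (Fcal X)} (hA : A ∈ 𝒲) {p : X} (hpA : p ∈ A.carrier)
    (hp : ¬IsOpen ({p} : Set X)) :
    ∃ B ∈ 𝒲, p ∉ B.carrier ∧ A.carrier \ {p} ⊆ B.carrier := by
  obtain ⟨T, K, hT, hTo, hK, ⟨hAT, hAK⟩, hbox⟩ := exists_fellBox_subset h𝒲 hA
  set W := (⋂₀ {U ∈ T | p ∈ U}) \ K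
  have hW : IsOpen W :=
    ((hT.subset (sep_subset _ _)).isOpen_sInter fun U hU => hTo U hU.1).sdiff hK.isClosed
  have hpW : p ∈ W := ⟨fun U hU => hU.2, disjoint_left.mp hAK hpA⟩
  obtain ⟨q, hqW, hqp⟩ :=
    (dense_compl_singleton_iff_not_open.mpr hp).inter_open_nonempty W hW ⟨p, hpW⟩
  refine ⟨⟨insert q (A.carrier \ {p}), insert_nonempty _ _, (A.finite_carrier.sdiff).insert q⟩,
    hbox _ ⟨fun U hU => ?_, disjoint_insert_left.mpr ⟨hqW.2, hAK.mono_left sdiff_subset⟩⟩,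
    fun h => h.elim (fun h => hqp h.symm) (fun h => h.2 rfl), subset_insert _ _⟩
  obtain ⟨y, hyA, hyU⟩ := hAT U hU
  by_cases hyp : y = p
  · exact ⟨q, mem_insert _ _, hqW.1 U ⟨hU, hyp ▸ hyU⟩⟩
  · exact ⟨y, mem_insert_of_mem _ ⟨hyA, hyp⟩, hyU⟩

end FellHyper

open FellHyper

theorem isD1Space_of_finite (Y : Type v) [TopologicalSpace Y] [Finite Y] : IsD1Space Y := by
  intro F _ _
  refine ⟨fun _ => ⋂₀ {V : Set Y | IsOpen V ∧ F ⊆ V}, fun _ => ⟨?_, ?_⟩, ?_⟩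
  · exact (toFinite _).isOpen_sInter fun V hV => hV.1
  · exact subset_sInter fun V hV => hV.2
  · exact fun V hV hFV => ⟨0, sInter_subset_of_mem ⟨hV, hFV⟩⟩

theorem not_isD1Space_fellHyper_of_discreteTopology {X : Type u} [TopologicalSpace X]
    [DiscreteTopology X] [Infinite X] : ¬IsD1Space (FellHyper X (Fcal X)) := by
  intro hD1
  let f : ℕ × ℕ ↪ X := Nat.pairEquiv.toEmbedding.trans (Infinite.natEmbedding X)
  let pt (x : X) : FellHyper X (Fcal X) := ⟨{x}, singleton_nonempty x, finite_singleton x⟩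
  obtain ⟨𝒩, h𝒩, h𝒩base⟩ := hD1 {A | A.carrier.Subsingleton}
    ⟨pt (f (0, 0)), subsingleton_singleton⟩ isClosed_setOf_subsingleton
  have hpair (n : ℕ) : ∃ w ∈ 𝒩 n, ∃ k, 0 < k ∧ w.carrier = {f (n, 0), f (n, k)} := by
    obtain ⟨K, hK, hK₀, hmem⟩ := exists_finite_forall_superset_mem (h𝒩 n).1
      ((h𝒩 n).2 (subsingleton_singleton (a := f (n, 0))) : pt (f (n, 0)) ∈ 𝒩 n)
    obtain ⟨k, hkK, hk⟩ := (hK.preimage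
      (f.injective.comp (Prod.mk_right_injective n)).injOn).infinite_compl.exists_gt 0
    exact ⟨⟨{f (n, 0), f (n, k)}, insert_nonempty _ _, (finite_singleton _).insert _⟩,
      hmem _ (singleton_subset_iff.mpr (mem_insert _ _)) (disjoint_insert_left.mpr
        ⟨disjoint_singleton_left.mp hK₀, disjoint_singleton_left.mpr hkK⟩),
      k, hk, rfl⟩
  choose w hw𝒩 k hk hwk using hpair
  have hnontrivial (n : ℕ) : (w n).carrier.Nontrivial := by
    rw [hwk]
    exact nontrivial_pair fun h => (hk n).ne (congrArg Prod.snd (f.injective h))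
  have hfibre (x : X) : {n | x ∈ (w n).carrier}.Finite := by
    refine Set.Subsingleton.finite fun n hn m hm => ?_
    simp only [mem_ofPred_eq, hwk, mem_insert_iff, mem_singleton_iff] at hn hm
    rcases hn with rfl | rfl <;> rcases hm with h | h <;> exact congrArg Prod.fst (f.injective h)
  obtain ⟨𝒱, h𝒱, hsub, hw𝒱⟩ := exists_isOpen_subsingleton_subset_forall_notMem w hnontrivial hfibre
  obtain ⟨n, hn⟩ := h𝒩base 𝒱 h𝒱 hsub
  exact hw𝒱 n (hn (hw𝒩 n))

theorem not_isD1Space_fellHyper_of_not_isOpen_singleton {X : Type u} [TopologicalSpace X]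
    [T2Space X] [Infinite X] {p : X} (hp : ¬IsOpen ({p} : Set X)) :
    ¬IsD1Space (FellHyper X (Fcal X)) := by
  intro hD1
  obtain ⟨𝒩, h𝒩, h𝒩base⟩ := hD1 {A | p ∈ A.carrier}
    ⟨⟨{p}, singleton_nonempty p, finite_singleton p⟩, rfl⟩ (isClosed_setOf_mem p)
  obtain ⟨x, hx, hxp⟩ : ∃ x : ℕ → X, Injective x ∧ ∀ k, x k ≠ p :=
    let e := (finite_singleton p).infinite_compl.natEmbedding
    ⟨fun k => e k, Subtype.val_injective.comp e.injective, fun k => (e k).2⟩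
  have hw (n : ℕ) : ∃ w ∈ 𝒩 n, p ∉ w.carrier ∧ ∀ k ≤ n, x k ∈ w.carrier := by
    let A : FellHyper X (Fcal X) :=
      ⟨insert p (x '' Iic n), insert_nonempty _ _, ((finite_Iic n).image x).insert p⟩
    obtain ⟨w, hw𝒩, hpw, hAw⟩ := exists_mem_notMem_of_not_isOpen_singleton (h𝒩 n).1
      ((h𝒩 n).2 (mem_insert p _) : A ∈ 𝒩 n) (mem_insert p _) hp
    exact ⟨w, hw𝒩, hpw, fun k hk => hAw ⟨mem_insert_of_mem _ ⟨k, hk, rfl⟩, hxp k⟩⟩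
  choose w hw𝒩 hpw hxw using hw
  let Ω (k : ℕ) : Set X := (⋃ m < k, (w m).carrier)ᶜ
  have hΩ (k : ℕ) : IsOpen (Ω k) :=
    ((finite_Iio k).biUnion fun m _ => (w m).finite_carrier).isClosed.isOpen_compl
  let 𝒱 := ⋃ k, {A : FellHyper X (Fcal X) | (A.carrier ∩ Ω k).Nonempty} ∩
    {A | Disjoint A.carrier {x k}}
  have h𝒱 : IsOpen 𝒱 := isOpen_iUnion fun k =>
    (isOpen_setOf_inter_nonempty (hΩ k)).inter (isOpen_setOf_disjoint isCompact_singleton)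
  have hsub : {A | p ∈ A.carrier} ⊆ 𝒱 := by
    intro A hpA
    obtain ⟨_, ⟨k, rfl⟩, hk⟩ := (infinite_range_of_injective hx).exists_notMem_finite
      A.finite_carrier
    refine mem_iUnion.mpr ⟨k, ⟨p, hpA, ?_⟩, disjoint_singleton_right.mpr hk⟩
    simpa [Ω] using fun m _ => hpw m
  obtain ⟨n, hn⟩ := h𝒩base 𝒱 h𝒱 hsub
  obtain ⟨k, ⟨y, hyw, hyΩ⟩, hxk⟩ := mem_iUnion.mp (hn (hw𝒩 n))
  rcases lt_or_ge n k with hnk | hkn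
  · exact hyΩ (mem_biUnion hnk hyw)
  · exact disjoint_singleton_right.mp hxk (hxw n k hkn)

/-- `ℱ(X)` with the Fell topology is a `D₁`-space iff `X` is finite. -/
theorem statement7 (X : Type u) [TopologicalSpace X] [T1Space X] [RegularSpace X] :
    IsD1Space (FellHyper X (Fcal X)) ↔ Finite X := by
  refine ⟨fun hD1 => ?_, fun _ => ?_⟩
  · by_contra hfin
    have : Infinite X := not_finite_iff_infinite.mp hfin
    by_cases hdisc : DiscreteTopology X
    · exact not_isD1Space_fellHyper_of_discreteTopology hD1
    · obtain ⟨p, hp⟩ : ∃ p : X, ¬IsOpen ({p} : Set X) := by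
        simpa [discreteTopology_iff_isOpen_singleton] using hdisc
      exact not_isD1Space_fellHyper_of_not_isOpen_singleton hp hD1
  · have : Finite (FellHyper X (Fcal X)) := Subtype.finite
    exact isD1Space_of_finite _
end

section
/- Let X be a sequential T1 regular space. Then F(X), the set of nonempty finite subsets of X, is an open subset of the hyperspace K(X) of nonempty compact subsets with the Vietoris topology if and only if X is discrete. -/
open Set TopologicalSpace

universe u v

/-! A Vietoris-open family containing `{x}` already contains every set squeezed between `{x}`
and some neighbourhood of `x`; if the family consists of finite sets, this forbids nontrivial
sequences converging to `x`, since the limit together with a tail of the sequence is an infinite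
compact set. In a sequential space this makes every point isolated. -/

open Filter Topology

lemma exists_mem_nhds_of_singleton_mem_vietoris {X : Type u} [TopologicalSpace X]
    {t : Set (Set X)} (ht : IsOpen[vietorisTopology X] t) {x : X} (hx : {x} ∈ t) :
    ∃ W ∈ 𝓝 x, ∀ H : Set X, x ∈ H → H ⊆ W → H ∈ t := by
  induction ht with
  | basic s hs =>
    rcases hs with ⟨U, hU, rfl⟩ | ⟨U, hU, rfl⟩
    · exact ⟨U, hU.mem_nhds (hx rfl), fun H _ hHU => hHU⟩
    · have hxU : x ∈ U := singleton_inter_nonempty.mp hx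
      exact ⟨U, hU.mem_nhds hxU, fun H hxH _ => ⟨x, hxH, hxU⟩⟩
  | univ => exact ⟨univ, univ_mem, fun _ _ _ => mem_univ _⟩
  | inter s₁ s₂ _ _ ih₁ ih₂ =>
    obtain ⟨W₁, hW₁, h₁⟩ := ih₁ hx.1
    obtain ⟨W₂, hW₂, h₂⟩ := ih₂ hx.2
    exact ⟨W₁ ∩ W₂, inter_mem hW₁ hW₂, fun H hxH hHW =>
      ⟨h₁ H hxH (hHW.trans inter_subset_left), h₂ H hxH (hHW.trans inter_subset_right)⟩⟩
  | sUnion S _ ih =>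
    obtain ⟨s, hs, hxs⟩ := hx
    obtain ⟨W, hW, h⟩ := ih s hs hxs
    exact ⟨W, hW, fun H hxH hHW => ⟨s, hs, h H hxH hHW⟩⟩

lemma infinite_range_of_tendsto_of_forall_ne {X : Type u} [TopologicalSpace X] [T1Space X]
    {u : ℕ → X} {x : X} (hux : Tendsto u atTop (𝓝 x)) (hne : ∀ n, u n ≠ x) :
    (range u).Infinite := by
  intro hfin
  have hx : (range u)ᶜ ∈ 𝓝 x :=
    hfin.isClosed.isOpen_compl.mem_nhds fun ⟨n, hn⟩ => hne n hn
  obtain ⟨n, hn⟩ := (hux.eventually_mem hx).exists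
  exact hn (mem_range_self n)

lemma exists_infinite_isCompact_of_tendsto {X : Type u} [TopologicalSpace X] [T1Space X]
    {u : ℕ → X} {x : X} (hux : Tendsto u atTop (𝓝 x)) (hne : ∀ n, u n ≠ x)
    {W : Set X} (hW : W ∈ 𝓝 x) :
    ∃ H : Set X, IsCompact H ∧ x ∈ H ∧ H ⊆ W ∧ H.Infinite := by
  obtain ⟨N, hN⟩ := eventually_atTop.mp (hux.eventually_mem hW)
  have htail : Tendsto (fun n => u (n + N)) atTop (𝓝 x) :=
    hux.comp (tendsto_add_atTop_nat N)
  refine ⟨insert x (range fun n => u (n + N)), htail.isCompact_insert_range, mem_insert x _,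
    insert_subset (mem_of_mem_nhds hW) (range_subset_iff.mpr fun n => hN _ le_add_self), ?_⟩
  exact (infinite_range_of_tendsto_of_forall_ne htail fun n => hne _).mono (subset_insert _ _)

theorem statement8_general (X : Type u) [TopologicalSpace X] [T1Space X]
    [SequentialSpace X] :
    IsOpen {A : VietorisHyper X (Kcal X) | A.carrier.Finite} ↔ DiscreteTopology X := by
  constructor
  · intro h
    obtain ⟨t, ht, hts⟩ := (isOpen_induced_iff (t := vietorisTopology X)).mp h
    have mem_iff : ∀ H (hH : H ∈ Kcal X), H ∈ t ↔ H.Finite := fun H hH =>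
      Iff.of_eq (congrArg ((⟨H, hH⟩ : VietorisHyper X (Kcal X)) ∈ ·) hts)
    refine discreteTopology_iff_isOpen_singleton.mpr fun x => ?_
    have hxt : {x} ∈ t :=
      (mem_iff _ ⟨singleton_nonempty x, isCompact_singleton⟩).mpr (finite_singleton x)
    obtain ⟨W, hW, hWt⟩ := exists_mem_nhds_of_singleton_mem_vietoris ht hxt
    refine isClosed_compl_iff.mp (IsSeqClosed.isClosed fun u p hu hup => ?_)
    by_contra hp
    obtain rfl : x = p := by simpa [eq_comm] using hp
    obtain ⟨H, hHc, hxH, hHW, hHinf⟩ := exists_infinite_isCompact_of_tendsto hup hu hW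
    exact hHinf ((mem_iff H ⟨⟨x, hxH⟩, hHc⟩).mp (hWt H hxH hHW))
  · intro
    have hall : {A : VietorisHyper X (Kcal X) | A.carrier.Finite} = univ :=
      eq_univ_of_forall fun A => A.2.2.finite_of_discrete
    exact hall ▸ isOpen_univ

/-- for sequential `X`, `ℱ(X)` is open in `(𝒦(X), τ_V)` iff `X` is discrete. -/
theorem statement8 (X : Type u) [TopologicalSpace X] [T1Space X] [RegularSpace X]
    [SequentialSpace X] :
    IsOpen {A : VietorisHyper X (Kcal X) | A.carrier.Finite} ↔ DiscreteTopology X :=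
  statement8_general X
end

section
/- Let X be a T1 regular space. Then no point of K(X) \ F(X), the set of nonempty infinite compact subsets of X, is an isolated point of the subspace K(X) \ F(X) of the hyperspace K(X) with the Vietoris topology. -/
open Set TopologicalSpace

universe u v

/-!
A basic Vietoris neighbourhood `⟨U₁, …, Uₖ⟩` of an infinite compact set `A` only pins
down finitely many points `aᵢ ∈ A ∩ Uᵢ`. Take a point `x` of `A` each of whose
neighbourhoods meets `A` in infinitely many points, and `b ∈ A` distinct from `x` and the
`aᵢ`. A T₁ regular space is Hausdorff, so `b` and `x` have disjoint open neighbourhoods `V`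
and `W`; then `(A \ V) ∪ {aᵢ}` is compact, infinite (it contains `A ∩ W`), lies in
`⟨U₁, …, Uₖ⟩`, and misses `b`.
-/

open Filter Topology

theorem vietorisTopology_eq_vietoris (X : Type u) [TopologicalSpace X] :
    vietorisTopology X = TopologicalSpace.vietoris X := by
  unfold vietorisTopology TopologicalSpace.vietoris
  congr 1
  ext S
  simp only [mem_union, mem_ofPred_eq, mem_image, eq_comm (a := S)]
  rfl

theorem mem_Kcal_sdiff_Fcal {X : Type u} [TopologicalSpace X] {A : Set X} :
    A ∈ Kcal X \ Fcal X ↔ IsCompact A ∧ A.Infinite :=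
  ⟨fun ⟨⟨hne, hc⟩, hnf⟩ => ⟨hc, fun hf => hnf ⟨hne, hf⟩⟩,
    fun ⟨hc, hinf⟩ => ⟨⟨hinf.nonempty, hc⟩, fun hf => hinf hf.2⟩⟩

section

variable {X : Type*} [TopologicalSpace X]

attribute [local instance] TopologicalSpace.vietoris

theorem IsCompact.exists_mem_forall_mem_nhds_inter_infinite {A : Set X} (hA : IsCompact A)
    (hinf : A.Infinite) : ∃ x ∈ A, ∀ W ∈ 𝓝 x, (A ∩ W).Infinite := by
  have := hinf.cofinite_inf_principal_neBot
  obtain ⟨x, hxA, hx⟩ := hA (f := cofinite ⊓ 𝓟 A) inf_le_right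
  refine ⟨x, hxA, fun W hW hfin => ?_⟩
  obtain ⟨y, hyW, hyAW, hyA⟩ := clusterPt_iff_nonempty.mp hx hW
    (inter_mem_inf hfin.compl_mem_cofinite (mem_principal_self A))
  exact hyAW ⟨hyA, hyW⟩

theorem IsCompact.exists_superset_ssubset_isCompact_infinite [T2Space X] {A S : Set X}
    (hA : IsCompact A) (hinf : A.Infinite) (hS : S.Finite) (hSA : S ⊆ A) :
    ∃ H, S ⊆ H ∧ H ⊂ A ∧ IsCompact H ∧ H.Infinite := by
  obtain ⟨x, -, hx⟩ := hA.exists_mem_forall_mem_nhds_inter_infinite hinf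
  obtain ⟨b, hbA, hbxS⟩ := (hinf.sdiff (hS.insert x)).nonempty
  obtain ⟨V, W, hV, hW, hbV, hxW, hVW⟩ :=
    t2_separation (ne_of_mem_of_not_mem (mem_insert x S) hbxS).symm
  refine ⟨(A \ V) ∪ S, subset_union_right, ?_, (hA.diff hV).union hS.isCompact, ?_⟩
  · refine ssubset_of_subset_not_subset (union_subset sdiff_subset hSA) fun h => ?_
    rcases h hbA with ⟨-, hbV'⟩ | hbS
    exacts [hbV' hbV, hbxS (mem_insert_of_mem x hbS)]
  · refine (hx W (hW.mem_nhds hxW)).mono ?_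
    rintro y ⟨hyA, hyW⟩
    exact Or.inl ⟨hyA, fun hyV => hVW.ne_of_mem hyV hyW rfl⟩

theorem exists_ne_isCompact_infinite_mem_of_isOpen_vietoris [T2Space X] {A : Set X}
    (hA : IsCompact A) (hinf : A.Infinite) {O : Set (Set X)} (hO : IsOpen O) (hAO : A ∈ O) :
    ∃ H ∈ O, H ≠ A ∧ IsCompact H ∧ H.Infinite := by
  obtain ⟨_, ⟨u, ⟨hu, -⟩, rfl⟩, ⟨hAu, hAmeets⟩, hBO⟩ :=
    TopologicalSpace.vietoris.isTopologicalBasis.exists_subset_of_mem_open hAO hO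
  have : Nonempty X := hinf.nonempty.to_type
  choose! a ha using hAmeets
  obtain ⟨H, haH, hHA, hHc, hHinf⟩ :=
    hA.exists_superset_ssubset_isCompact_infinite hinf (hu.image a)
      (image_subset_iff.2 fun U hU => (ha U hU).1)
  refine ⟨H, hBO ⟨hHA.subset.trans hAu, fun U hU => ?_⟩, hHA.ne, hHc, hHinf⟩
  exact ⟨a U, haH (mem_image_of_mem a hU), (ha U hU).2⟩

end

/-- no point of `𝒦(X) \ ℱ(X)` is isolated in the Vietoris topology. -/
theorem statement9 (X : Type u) [TopologicalSpace X] [T1Space X] [RegularSpace X]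
    (A : VietorisHyper X (Kcal X \ Fcal X)) :
    ¬ IsOpen ({A} : Set (VietorisHyper X (Kcal X \ Fcal X))) := by
  intro hopen
  obtain ⟨O, hO, hpre⟩ := (isOpen_induced_iff (t := vietorisTopology X)).mp hopen
  rw [vietorisTopology_eq_vietoris] at hO
  obtain ⟨hAc, hAinf⟩ := mem_Kcal_sdiff_Fcal.mp A.2
  have hAO : A.val ∈ O := show A ∈ Subtype.val ⁻¹' O from hpre ▸ rfl
  obtain ⟨H, hHO, hHA, hHK⟩ :=
    exists_ne_isCompact_infinite_mem_of_isOpen_vietoris hAc hAinf hO hAO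
  have hH : (⟨H, mem_Kcal_sdiff_Fcal.mpr hHK⟩ : VietorisHyper X _) ∈ ({A} : Set _) :=
    hpre ▸ hHO
  exact hHA (congrArg Subtype.val hH)
end

section
/- Let X be a sequential T1 regular space with a G_δ*-diagonal. Then the subspace K(X) \ F(X) of nonempty infinite compact subsets of X, with the topology inherited from the Vietoris topology on K(X), is a D_1-space if and only if X is discrete. -/
open Set TopologicalSpace

universe u v

/-!
If `X` is not discrete, sequentiality and `T₁` give an injective sequence `x j → p` with
`x j ≠ p`. The sets `A_k = {p} ∪ {x j | j ≥ k}` are infinite and compact, and in the Hausdorff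
space `𝒦(X)` they converge to `{p}`, which is finite; hence `{A_k | k ∈ ℕ}` is closed in
`𝒦(X) \ ℱ(X)`. It has no countable neighbourhood base: each `A_n` is the limit of
`A_n \ {x m}` as `m → ∞`, and any diagonal choice `A_n \ {x (m n)}` can be separated from all
the `A_k` by one open set. If `X` is discrete, `𝒦(X) \ ℱ(X)` is empty.
-/

open Filter Topology Function

namespace VietorisHyper

variable {X : Type u} [TopologicalSpace X] {S T : Set (Set X)}

theorem isOpen_setOf_subset {U : Set X} (hU : IsOpen U) :
    IsOpen {A : VietorisHyper X S | A.carrier ⊆ U} :=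
  ⟨_, isOpen_generateFrom_of_mem (Or.inl ⟨U, hU, rfl⟩), rfl⟩

theorem isOpen_setOf_inter_nonempty {U : Set X} (hU : IsOpen U) :
    IsOpen {A : VietorisHyper X S | (A.carrier ∩ U).Nonempty} :=
  ⟨_, isOpen_generateFrom_of_mem (Or.inr ⟨U, hU, rfl⟩), rfl⟩

theorem tendsto_nhds_iff {α : Type*} {l : Filter α} {f : α → VietorisHyper X S}
    {A : VietorisHyper X S} :
    Tendsto f l (𝓝 A) ↔ ∀ U : Set X, IsOpen U →
      (A.carrier ⊆ U → ∀ᶠ a in l, (f a).carrier ⊆ U) ∧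
      ((A.carrier ∩ U).Nonempty → ∀ᶠ a in l, ((f a).carrier ∩ U).Nonempty) := by
  rw [@nhds_induced _ _ (vietorisTopology X), tendsto_comap_iff, vietorisTopology,
    TopologicalSpace.tendsto_nhds_generateFrom_iff]
  constructor
  · intro h U hU
    exact ⟨h _ (Or.inl ⟨U, hU, rfl⟩), h _ (Or.inr ⟨U, hU, rfl⟩)⟩
  · rintro h s (⟨U, hU, rfl⟩ | ⟨U, hU, rfl⟩)
    exacts [(h U hU).1, (h U hU).2]

def inclusion (h : S ⊆ T) (A : VietorisHyper X S) : VietorisHyper X T := ⟨A.carrier, h A.2⟩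

theorem continuous_inclusion (h : S ⊆ T) : Continuous (inclusion h) :=
  continuous_induced_rng.2 continuous_induced_dom

theorem exists_disjoint_isOpen_of_mem_of_notMem [T2Space X] {A B : VietorisHyper X (Kcal X)} {x : X}
    (hxA : x ∈ A.carrier) (hxB : x ∉ B.carrier) :
    ∃ O O' : Set (VietorisHyper X (Kcal X)), IsOpen O ∧ IsOpen O' ∧ A ∈ O ∧ B ∈ O' ∧
      Disjoint O O' := by
  obtain ⟨U, V, hU, hV, hxU, hBV, hUV⟩ := SeparatedNhds.of_isCompact_isCompact isCompact_singleton
    B.2.2 (disjoint_singleton_left.2 hxB)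
  refine ⟨_, _, isOpen_setOf_inter_nonempty hU, isOpen_setOf_subset hV,
    ⟨x, hxA, hxU rfl⟩, hBV, disjoint_left.2 ?_⟩
  rintro C ⟨y, hyC, hyU⟩ hCV
  exact disjoint_left.1 hUV hyU (hCV hyC)

instance [T2Space X] : T2Space (VietorisHyper X (Kcal X)) := by
  refine t2Space_iff _ |>.2 fun A B hAB => ?_
  obtain ⟨x, hxA, hxB⟩ | ⟨x, hxB, hxA⟩ : (A.carrier \ B.carrier).Nonempty ∨
      (B.carrier \ A.carrier).Nonempty := by
    by_contra! h
    exact hAB (Subtype.ext (subset_antisymm (sdiff_eq_empty.1 h.1) (sdiff_eq_empty.1 h.2)))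
  · exact exists_disjoint_isOpen_of_mem_of_notMem hxA hxB
  · obtain ⟨O, O', hO, hO', hBO, hAO', hOO'⟩ := exists_disjoint_isOpen_of_mem_of_notMem hxB hxA
    exact ⟨O', O, hO', hO, hAO', hBO, hOO'.symm⟩

end VietorisHyper

section ConvergentSequence

variable {X : Type u} {x : ℕ → X} {p : X}

def subseqWithLimit (p : X) (x : ℕ → X) (J : Set ℕ) : Set X := insert p (x '' J)

theorem apply_mem_subseqWithLimit_iff (hinj : Injective x) (hne : ∀ j, x j ≠ p) {J : Set ℕ}
    {i : ℕ} : x i ∈ subseqWithLimit p x J ↔ i ∈ J := by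
  simp [subseqWithLimit, hne i, hinj.mem_set_image]

theorem subseqWithLimit_subset_compl_image_iff (hinj : Injective x) (hne : ∀ j, x j ≠ p)
    {J I : Set ℕ} : subseqWithLimit p x J ⊆ (x '' I)ᶜ ↔ Disjoint J I := by
  rw [subseqWithLimit, subset_compl_iff_disjoint_right, disjoint_insert_left,
    disjoint_image_iff hinj]
  simp [hne]

variable [TopologicalSpace X]

theorem isCompact_subseqWithLimit (hx : Tendsto x atTop (𝓝 p)) (J : Set ℕ) :
    IsCompact (subseqWithLimit p x J) := by
  have hxJ : Tendsto (x ∘ ((↑) : J → ℕ)) cofinite (𝓝 p) :=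
    (Nat.cofinite_eq_atTop ▸ hx).comp Subtype.val_injective.tendsto_cofinite
  simpa [subseqWithLimit, range_comp] using hxJ.isCompact_insert_range_of_cofinite

theorem exists_isOpen_inter_subseqWithLimit_nonempty_iff [T2Space X]
    (hx : Tendsto x atTop (𝓝 p)) (hinj : Injective x) (hne : ∀ j, x j ≠ p) (j : ℕ) :
    ∃ V : Set X, IsOpen V ∧ ∀ J, (subseqWithLimit p x J ∩ V).Nonempty ↔ j ∈ J := by
  refine ⟨(subseqWithLimit p x {j}ᶜ)ᶜ, (isCompact_subseqWithLimit hx _).isClosed.isOpen_compl,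
    fun J => ⟨?_, fun hj => ⟨x j, (apply_mem_subseqWithLimit_iff hinj hne).2 hj,
      fun h => (apply_mem_subseqWithLimit_iff hinj hne).1 h rfl⟩⟩⟩
  rintro ⟨y, hyJ, hyV⟩
  rcases hyJ with rfl | ⟨i, hi, rfl⟩
  · exact absurd (mem_insert _ _) hyV
  · obtain rfl : i = j := by_contra fun hij => hyV ((apply_mem_subseqWithLimit_iff hinj hne).2 hij)
    exact hi

end ConvergentSequence

theorem not_exists_countable_nhds_basis_of_fan {Y : Type*} [TopologicalSpace Y] {F : Set Y}
    {a : ℕ → Y} {c : ℕ → ℕ → Y} (haF : ∀ n, a n ∈ F) (hc : ∀ n, Tendsto (c n) atTop (𝓝 (a n)))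
    (N : ℕ → ℕ) (hsep : ∀ m : ℕ → ℕ, (∀ n, N n ≤ m n) →
      ∃ W : Set Y, IsOpen W ∧ F ⊆ W ∧ ∀ n, c n (m n) ∉ W) :
    ¬ ∃ B : ℕ → Set Y, (∀ n, IsOpen (B n) ∧ F ⊆ B n) ∧
      ∀ V : Set Y, IsOpen V → F ⊆ V → ∃ n, B n ⊆ V := by
  rintro ⟨B, hB, hbase⟩
  have hmB : ∀ n, ∃ m, N n ≤ m ∧ c n m ∈ B n := fun n =>
    ((eventually_ge_atTop (N n)).and
      ((hc n).eventually ((hB n).1.mem_nhds ((hB n).2 (haF n))))).exists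
  choose m hNm hmB using hmB
  obtain ⟨W, hW, hFW, hcW⟩ := hsep m hNm
  obtain ⟨n, hn⟩ := hbase W hW hFW
  exact hcW n (hn (hmB n))

section SubseqPoint

variable {X : Type u} [TopologicalSpace X] {x : ℕ → X} {p : X}

def subseqPoint (hx : Tendsto x atTop (𝓝 p)) (hinj : Injective x) {J : Set ℕ}
    (hJ : J.Infinite) : VietorisHyper X (Kcal X \ Fcal X) :=
  ⟨subseqWithLimit p x J, ⟨insert_nonempty _ _, isCompact_subseqWithLimit hx J⟩,
    fun h => ((infinite_image_iff hinj.injOn).2 hJ).mono (subset_insert _ _) h.2⟩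

variable (hx : Tendsto x atTop (𝓝 p)) (hinj : Injective x)
include hx hinj

theorem tendsto_subseqPoint_diff_singleton {J : Set ℕ} (hJ : J.Infinite) :
    Tendsto (fun m => subseqPoint hx hinj (hJ.sdiff (finite_singleton m))) atTop
      (𝓝 (subseqPoint hx hinj hJ)) := by
  refine VietorisHyper.tendsto_nhds_iff.2 fun U _ => ⟨fun hJU => .of_forall fun m =>
    (insert_subset_insert (image_mono sdiff_subset)).trans hJU, ?_⟩
  rintro ⟨y, hyJ, hyU⟩
  rcases hyJ with rfl | ⟨j, hj, rfl⟩
  · exact .of_forall fun m => ⟨y, mem_insert _ _, hyU⟩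
  · filter_upwards [eventually_ne_atTop j] with m hm
    exact ⟨x j, mem_insert_of_mem _ ⟨j, ⟨hj, hm.symm⟩, rfl⟩, hyU⟩

theorem isClosed_range_subseqPoint_Ici [T2Space X] :
    IsClosed (range fun k => subseqPoint hx hinj (Ici_infinite k)) := by
  let tail (k : ℕ) : VietorisHyper X (Kcal X) :=
    VietorisHyper.inclusion sdiff_subset (subseqPoint hx hinj (Ici_infinite k))
  let lim : VietorisHyper X (Kcal X) := ⟨{p}, singleton_nonempty p, isCompact_singleton⟩
  have htail : Tendsto tail atTop (𝓝 lim) := by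
    refine VietorisHyper.tendsto_nhds_iff.2 fun U hU => ⟨fun hpU => ?_,
      fun ⟨_, hp, hpU⟩ => .of_forall fun k => ⟨p, mem_insert _ _, hp ▸ hpU⟩⟩
    filter_upwards [eventually_forall_ge_atTop.2 (hx (hU.mem_nhds (hpU rfl)))] with k hk
    exact insert_subset (hpU rfl) (image_subset_iff.2 fun j hj => hk j hj)
  convert htail.isCompact_insert_range.isClosed.preimage
    (VietorisHyper.continuous_inclusion sdiff_subset) using 1
  ext A
  simp only [mem_preimage, mem_insert_iff, mem_range]
  constructor
  · rintro ⟨k, rfl⟩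
    exact .inr ⟨k, rfl⟩
  · rintro (hA | ⟨k, hk⟩)
    · have hAp : A.carrier = {p} := congrArg VietorisHyper.carrier hA
      exact absurd ⟨A.2.1.1, show A.carrier.Finite from hAp ▸ finite_singleton p⟩ A.2.2
    · have hkA : (tail k).carrier = A.carrier := congrArg VietorisHyper.carrier hk
      exact ⟨k, Subtype.ext hkA⟩

end SubseqPoint

theorem not_isD1Space_vietorisHyper_of_tendsto {X : Type u} [TopologicalSpace X] [T2Space X]
    {x : ℕ → X} {p : X} (hx : Tendsto x atTop (𝓝 p)) (hinj : Injective x)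
    (hne : ∀ j, x j ≠ p) : ¬ IsD1Space (VietorisHyper X (Kcal X \ Fcal X)) := by
  intro hD1
  choose V hVo hV using exists_isOpen_inter_subseqWithLimit_nonempty_iff hx hinj hne
  let a (k : ℕ) := subseqPoint hx hinj (Ici_infinite k)
  refine not_exists_countable_nhds_basis_of_fan (F := range a) mem_range_self
    (fun n => tendsto_subseqPoint_diff_singleton hx hinj (Ici_infinite n)) (· + 1) (fun m hm => ?_)
    (hD1 _ (range_nonempty a) (isClosed_range_subseqPoint_Ici hx hinj))
  -- `A_k ∈ W k`, while `A_n \ {x (m n)}` could only lie in `W n` but misses `x (m n)`.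
  let W (k : ℕ) : Set (VietorisHyper X (Kcal X \ Fcal X)) :=
    {A | (A.carrier ∩ V k).Nonempty ∧ (A.carrier ∩ V (m k)).Nonempty ∧
      A.carrier ⊆ (x '' Iio k)ᶜ}
  have hW : ∀ k {J : Set ℕ} (hJ : J.Infinite),
      subseqPoint hx hinj hJ ∈ W k ↔ k ∈ J ∧ m k ∈ J ∧ Disjoint J (Iio k) := fun k J _ =>
    and_congr (hV k J) (and_congr (hV (m k) J) (subseqWithLimit_subset_compl_image_iff hinj hne))
  have hWo (k : ℕ) : IsOpen (W k) :=
    (VietorisHyper.isOpen_setOf_inter_nonempty (hVo k)).inter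
      ((VietorisHyper.isOpen_setOf_inter_nonempty (hVo (m k))).inter
        (VietorisHyper.isOpen_setOf_subset ((finite_Iio k).image x).isClosed.isOpen_compl))
  refine ⟨⋃ k, W k, isOpen_iUnion hWo, ?_, ?_⟩
  · rintro _ ⟨k, rfl⟩
    exact mem_iUnion.2
      ⟨k, (hW k _).2 ⟨mem_Ici.2 le_rfl, k.le_succ.trans (hm k), Ici_disjoint_Iio le_rfl⟩⟩
  · intro n hn
    obtain ⟨k, hk⟩ := mem_iUnion.1 hn
    obtain ⟨⟨hnk, -⟩, ⟨-, hmk⟩, hdisj⟩ := (hW k _).1 hk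
    have hkn : k ≤ n := not_lt.1 fun hlt =>
      disjoint_left.1 hdisj ⟨mem_Ici.2 le_rfl, fun h => (hm n).not_gt (h ▸ n.lt_succ_self)⟩ hlt
    obtain rfl : k = n := le_antisymm hkn hnk
    exact hmk rfl

theorem exists_injective_tendsto_of_tendsto {X : Type u} [TopologicalSpace X] [T1Space X]
    {u : ℕ → X} {q : X} (hu : ∀ n, u n ≠ q) (hlim : Tendsto u atTop (𝓝 q)) :
    ∃ x : ℕ → X, Injective x ∧ (∀ n, x n ≠ q) ∧ Tendsto x atTop (𝓝 q) := by
  have hfin : ∀ U ∈ 𝓝 q, (range u \ U).Finite := fun U hU =>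
    ((Nat.cofinite_eq_atTop ▸ hlim) hU).image u |>.subset <| by
      rintro _ ⟨⟨n, rfl⟩, hn⟩
      exact mem_image_of_mem u hn
  have hinf : (range u).Infinite := fun h =>
    let ⟨n, hn⟩ := (hlim.eventually_mem
      (h.isClosed.isOpen_compl.mem_nhds fun ⟨n, hn⟩ => hu n hn)).exists
    hn (mem_range_self n)
  let e := hinf.natEmbedding _
  let x (n : ℕ) : X := e n
  have hinj : Injective x := fun m n h => e.injective (Subtype.ext h)
  refine ⟨x, hinj, fun n => ?_, ?_⟩
  · obtain ⟨k, hk⟩ := (e n).2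
    exact fun h => hu k (hk.trans h)
  · rw [← Nat.cofinite_eq_atTop]
    exact fun U hU => ((hfin U hU).preimage hinj.injOn).subset fun n hn => ⟨(e n).2, hn⟩

theorem exists_injective_tendsto_of_not_discreteTopology {X : Type u} [TopologicalSpace X]
    [T1Space X] [SequentialSpace X] (h : ¬ DiscreteTopology X) :
    ∃ (x : ℕ → X) (p : X), Injective x ∧ (∀ n, x n ≠ p) ∧ Tendsto x atTop (𝓝 p) := by
  obtain ⟨q, hq⟩ : ∃ q : X, ¬ IsOpen {q} := by
    simpa [discreteTopology_iff_isOpen_singleton] using h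
  have hseq : ¬ IsSeqClosed ({q}ᶜ : Set X) := fun h' => hq (isClosed_compl_iff.1 h'.isClosed)
  simp only [IsSeqClosed, not_forall, mem_compl_iff, mem_singleton_iff, not_not] at hseq
  obtain ⟨u, q, hu, hlim, rfl⟩ := hseq
  obtain ⟨x, hx⟩ := exists_injective_tendsto_of_tendsto hu hlim
  exact ⟨x, q, hx⟩

theorem statement10_general (X : Type u) [TopologicalSpace X] [T1Space X] [RegularSpace X]
    [SequentialSpace X] :
    IsD1Space (VietorisHyper X (Kcal X \ Fcal X)) ↔ DiscreteTopology X := by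
  refine ⟨fun hD1 => by_contra fun hX => ?_, fun _ F ⟨A, _⟩ _ => ?_⟩
  · obtain ⟨x, p, hinj, hne, hx⟩ := exists_injective_tendsto_of_not_discreteTopology hX
    exact not_isD1Space_vietorisHyper_of_tendsto hx hinj hne hD1
  · exact absurd ⟨A.2.1.1, A.2.1.2.finite_of_discrete⟩ A.2.2

/-- for a sequential space with a `G_δ*`-diagonal, `𝒦(X) \ ℱ(X)` with the
Vietoris topology is a `D₁`-space iff `X` is discrete. -/
theorem statement10 (X : Type u) [TopologicalSpace X] [T1Space X] [RegularSpace X]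
    [SequentialSpace X] (hG : HasGdeltaStarDiagonal X) :
    IsD1Space (VietorisHyper X (Kcal X \ Fcal X)) ↔ DiscreteTopology X :=
  statement10_general X
end
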